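/- arXiv:math/0007194 — 8 statements merged into one kernel-verified Lean document; each statement's English description precedes it below -/
import Mathlib

section
/- For every permutation τ of {1,...,k} avoiding both patterns 123 and 132, there exist positive integers r_1,...,r_m with r_1+⋯+r_m = k such that τ = (β_1,...,β_m), where β_i = (t_i−1, t_i−2, ..., t_i−r_i+1, t_i) and t_i = k − (r_1+⋯+r_{i−1}). -/
/-- `σ` contains the pattern `p` (given as a sequence of values). -/
def PermContains {n k : ℕ} (σ : Equiv.Perm (Fin n)) (p : Fin k → Fin k) : Prop :=
  ∃ f : Fin k → Fin n, StrictMono f ∧ ∀ i j : Fin k, p i < p j ↔ σ (f i) < σ (f j)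

/-- `σ` avoids the pattern `p`. -/
def PermAvoids {n k : ℕ} (σ : Equiv.Perm (Fin n)) (p : Fin k → Fin k) : Prop :=
  ¬ PermContains σ p

def p123 : Fin 3 → Fin 3 := ![0, 1, 2]
def p132 : Fin 3 → Fin 3 := ![0, 2, 1]
def p213 : Fin 3 → Fin 3 := ![1, 0, 2]
def p231 : Fin 3 → Fin 3 := ![1, 2, 0]
def p312 : Fin 3 → Fin 3 := ![2, 0, 1]
def p321 : Fin 3 → Fin 3 := ![2, 1, 0]

/-- the list `a, a-1, ..., b` (empty if `b > a`). -/
def descList (a b : ℕ) : List ℕ := (List.range (a + 1 - b)).map (fun j => a - j)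

/-- the list `a, a+1, ..., b` (empty if `b > a`). -/
def ascList (a b : ℕ) : List ℕ := (List.range (b + 1 - a)).map (fun j => a + j)


/-- Block decomposition used for `S_k(123,132)`:
`blocksList t (r :: rs) = (t-1, t-2, ..., t-r+1, t) ++ blocksList (t-r) rs`. -/
def blocksList : ℕ → List ℕ → List ℕ
  | _, [] => []
  | t, r :: rs => ((List.range (r - 1)).map (fun j => t - 1 - j)) ++ [t] ++ blocksList (t - r) rs

/-- Auxiliary predicate: in each suffix, no two distinct later elements both
exceed the head. -/
def good : List ℕ → Prop
  | [] => True
  | a :: l => (∀ x ∈ l, ∀ y ∈ l, x ≠ y → a < x → a < y → False) ∧ good l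

lemma contains_of {k : ℕ} (τ : Equiv.Perm (Fin k)) (i j l : Fin k)
    (hij : i < j) (hjl : j < l) (h1 : τ i < τ j) (h2 : τ i < τ l) :
    PermContains τ p123 ∨ PermContains τ p132 := by
  have hne : τ j ≠ τ l := fun h => absurd (τ.injective h) (by omega)
  have hmono : StrictMono (![i, j, l] : Fin 3 → Fin k) := by
    intro a b hab
    fin_cases a <;> fin_cases b <;> simp_all <;> omega
  rcases lt_or_gt_of_ne hne with h | h
  · left
    exact ⟨![i, j, l], hmono, by
      intro a b; fin_cases a <;> fin_cases b <;>
        simp [p123, Matrix.cons_val_zero, Matrix.cons_val_one] <;> omega⟩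
  · right
    exact ⟨![i, j, l], hmono, by
      intro a b; fin_cases a <;> fin_cases b <;>
        simp [p132, Matrix.cons_val_zero, Matrix.cons_val_one] <;> omega⟩

lemma good_ofFn : ∀ (k : ℕ) (g : Fin k → ℕ),
    (∀ i j l : Fin k, i < j → j < l → g i < g j → g i < g l → False) →
    good (List.ofFn g) := by
  intro k
  induction k with
  | zero => intro g _; simp [good, List.ofFn_zero]
  | succ n ih =>
    intro g hg
    rw [List.ofFn_succ]
    refine ⟨?_, ih (g ∘ Fin.succ) ?_⟩
    · intro x hx y hy hxy hax hay
      obtain ⟨i, rfl⟩ := List.mem_ofFn.mp hx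
      obtain ⟨j, rfl⟩ := List.mem_ofFn.mp hy
      have hij : i ≠ j := fun h => hxy (by rw [h])
      rcases lt_or_gt_of_ne hij with h | h
      · exact hg 0 i.succ j.succ (Fin.succ_pos i) (by simpa using h) hax hay
      · exact hg 0 j.succ i.succ (Fin.succ_pos j) (by simpa using h) hay hax
    · intro i j l hij hjl h1 h2
      exact hg i.succ j.succ l.succ (by simpa using hij) (by simpa using hjl) h1 h2

lemma main_ind : ∀ (n : ℕ) (L : List ℕ) (t c : ℕ), L.length = n → 1 ≤ n → c + 1 ≤ t →
    n ≤ c + 1 → L.Nodup → good L → (∀ x, x ∈ L ↔ x = t ∨ (c + 1 - n < x ∧ x ≤ c)) →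
    ∃ p rs, p + 1 + rs.sum = n ∧ (∀ r ∈ rs, 1 ≤ r) ∧
      L = ((List.range p).map (fun j => c - j)) ++ [t] ++ blocksList (c - p) rs := by
  intro n
  induction n with
  | zero => omega
  | succ n ih =>
    intro L t c hlen _ hct hnc hnd hgood hmem
    match L, hlen with
    | a :: l, hlen =>
    simp only [List.length_cons, Nat.succ.injEq] at hlen
    rcases Nat.eq_zero_or_pos n with hn0 | hn1
    · -- singleton case
      subst hn0
      have hl : l = [] := List.eq_nil_of_length_eq_zero hlen
      subst hl
      have ha := (hmem a).mp (by simp)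
      have hat : a = t := by omega
      refine ⟨0, [], by simp, by simp, ?_⟩
      simp [hat, blocksList]
    · have htL : t ∈ (a :: l) := (hmem t).mpr (Or.inl rfl)
      have hanl : a ∉ l := (List.nodup_cons.mp hnd).1
      have hndl : l.Nodup := (List.nodup_cons.mp hnd).2
      have hgl : good l := hgood.2
      by_cases hat : a = t
      · -- head is the max: block of size 1 starts here
        subst hat
        have hcge : 1 ≤ c := by omega
        have hmem' : ∀ x, x ∈ l ↔ x = c ∨ (c - 1 + 1 - n < x ∧ x ≤ c - 1) := by
          intro x
          constructor
          · intro hx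
            have hxL := (hmem x).mp (List.mem_cons_of_mem _ hx)
            have hxt : x ≠ a := fun h => hanl (h ▸ hx)
            omega
          · intro hx
            have hxL : x ∈ a :: l := (hmem x).mpr (by omega)
            rcases List.mem_cons.mp hxL with h | h
            · omega
            · exact h
        obtain ⟨p, rs, hsum, hpos, hform⟩ := ih l c (c - 1) hlen hn1 (by omega) (by omega)
          hndl hgl hmem'
        refine ⟨0, (p + 1) :: rs, by simp; omega, ?_, ?_⟩
        · intro r hr
          rcases List.mem_cons.mp hr with h | h
          · omega
          · exact hpos r h
        · simp only [List.range_zero, List.map_nil, List.nil_append, blocksList]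
          have h1 : p + 1 - 1 = p := by omega
          have h2 : c - 0 - (p + 1) = c - 1 - p := by omega
          simp only [Nat.sub_zero] at *
          rw [h1, hform]
          simp [h2]
      · -- head is not the max: a = c, peel one descent step
        have htl : t ∈ l := by
          rcases List.mem_cons.mp htL with h | h
          · exact absurd h.symm hat
          · exact h
        have haL := (hmem a).mp (by simp)
        have hac : a ≤ c := by omega
        have hlta : c + 1 - (n+1) < a := by omega
        have hsmall : ∀ x ∈ l, x ≠ t → x < a := by
          intro x hx hxt
          by_contra hh
          push_neg at hh
          have hxa : x ≠ a := fun h => hanl (h ▸ hx)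
          have : a < x := lt_of_le_of_ne hh (Ne.symm hxa)
          exact hgood.1 x hx t htl hxt this (by omega)
        have hcl : c ∈ a :: l := (hmem c).mpr (by omega)
        have hacc : a = c := by
          rcases List.mem_cons.mp hcl with h | h
          · omega
          · have := hsmall c h (by omega); omega
        subst hacc
        have hmem' : ∀ x, x ∈ l ↔ x = t ∨ (a - 1 + 1 - n < x ∧ x ≤ a - 1) := by
          intro x
          constructor
          · intro hx
            have hxL := (hmem x).mp (List.mem_cons_of_mem _ hx)
            have hxa : x ≠ a := fun h => hanl (h ▸ hx)
            omega
          · intro hx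
            have hxL : x ∈ a :: l := (hmem x).mpr (by omega)
            rcases List.mem_cons.mp hxL with h | h
            · subst h
              exfalso
              rcases hx with h | h
              · exact hat h
              · omega
            · exact h
        obtain ⟨p, rs, hsum, hpos, hform⟩ := ih l t (a - 1) hlen hn1 (by omega) (by omega)
          hndl hgl hmem'
        refine ⟨p + 1, rs, by omega, hpos, ?_⟩
        have hr : List.range (p + 1) = 0 :: (List.range p).map Nat.succ :=
          List.range_succ_eq_map
        rw [hr]
        simp only [List.map_cons, List.map_map, Nat.sub_zero, List.cons_append]
        have hfun : ((fun j => a - j) ∘ Nat.succ) = (fun j => a - 1 - j) := by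
          funext j; simp [Function.comp]; omega
        have h2 : a - (p + 1) = a - 1 - p := by omega
        rw [hfun, h2, hform]

theorem stmt0 (k : ℕ) (τ : Equiv.Perm (Fin k))
    (h1 : PermAvoids τ p123) (h2 : PermAvoids τ p132) :
    ∃ rs : List ℕ, (∀ r ∈ rs, 1 ≤ r) ∧ rs.sum = k ∧
      List.ofFn (fun i : Fin k => (τ i : ℕ) + 1) = blocksList k rs := by
  set g : Fin k → ℕ := fun i => (τ i : ℕ) + 1 with hg
  rcases Nat.eq_zero_or_pos k with hk0 | hk1
  · subst hk0
    exact ⟨[], by simp, by simp, by simp [blocksList]⟩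
  · have hnd : (List.ofFn g).Nodup := by
      rw [List.nodup_ofFn]
      intro i j hij
      simp only [hg] at hij
      have : τ i = τ j := by
        apply Fin.ext; omega
      exact τ.injective this
    have hgood : good (List.ofFn g) := by
      apply good_ofFn
      intro i j l hij hjl hl1 hl2
      have hlt1 : τ i < τ j := by simp only [hg] at hl1; exact Fin.lt_def.mpr (by omega)
      have hlt2 : τ i < τ l := by simp only [hg] at hl2; exact Fin.lt_def.mpr (by omega)
      rcases contains_of τ i j l hij hjl hlt1 hlt2 with h | h
      · exact h1 h
      · exact h2 h
    have hmem : ∀ x, x ∈ List.ofFn g ↔ x = k ∨ (k - 1 + 1 - k < x ∧ x ≤ k - 1) := by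
      intro x
      rw [List.mem_ofFn]
      constructor
      · rintro ⟨i, rfl⟩
        have := (τ i).isLt
        simp only [hg]
        omega
      · intro hx
        have hx' : 1 ≤ x ∧ x ≤ k := by omega
        refine ⟨τ.symm ⟨x - 1, by omega⟩, ?_⟩
        simp only [hg, Equiv.apply_symm_apply]
        omega
    obtain ⟨p, rs, hsum, hpos, hform⟩ := main_ind k (List.ofFn g) k (k - 1)
      (by simp) hk1 (by omega) (by omega) hnd hgood hmem
    refine ⟨(p + 1) :: rs, ?_, by simp; omega, ?_⟩
    · intro r hr
      rcases List.mem_cons.mp hr with h | h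
      · omega
      · exact hpos r h
    · rw [hform]
      simp only [blocksList]
      have h1' : p + 1 - 1 = p := by omega
      have h2' : k - (p + 1) = k - 1 - p := by omega
      rw [h1', h2']
end

section
/- Let a(n) denote the number of permutations in S_n avoiding all three patterns 123, 132, and 3214. Then a(n) satisfies the Tribonacci recurrence: a(n) = a(n−1) + a(n−2) + a(n−3) for all n ≥ 5. -/
/-!
Avoiding 123 and 132 means that every entry has at most one larger entry to its right. So an
avoider of length `n ≥ 3` begins with `n`, with `n-1, n`, or with `n-1, n-2, n`; in the last case
`n` must come third, since `n-1, n-2, x, n` would be a 3214. Deleting the first entry maps the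
avoiders beginning with `n`, with `n-1, n` and with `n-1, n-2, n` bijectively onto all avoiders of
length `n-1`, those beginning with `n-1`, and those beginning with `n-2, n-1` respectively, since
none of the three patterns can occur starting at that first entry. Iterating gives
`a n = a (n-1) + a (n-2) + a (n-3)`.
-/

def p3214 : Fin 4 → Fin 4 := ![2, 1, 0, 3]

open Equiv

section Occurrences

variable {n : ℕ} (σ : Perm (Fin n)) {a b c d : Fin n}

lemma permContains_p123 (hab : a < b) (hbc : b < c) (h₁ : σ a < σ b) (h₂ : σ b < σ c) :
    PermContains σ p123 := by
  refine ⟨![a, b, c], by simp [hab, hbc], fun i j => ?_⟩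
  have := h₁.trans h₂
  fin_cases i <;> fin_cases j <;> simp [p123, h₁, h₂, this, h₁.le, h₂.le, this.le]

lemma permContains_p132 (hab : a < b) (hbc : b < c) (h₁ : σ a < σ c) (h₂ : σ c < σ b) :
    PermContains σ p132 := by
  refine ⟨![a, b, c], by simp [hab, hbc], fun i j => ?_⟩
  have := h₁.trans h₂
  fin_cases i <;> fin_cases j <;> simp [p132, h₁, h₂, this, h₁.le, h₂.le, this.le]

lemma permContains_p3214 (hab : a < b) (hbc : b < c) (hcd : c < d)
    (h₁ : σ c < σ b) (h₂ : σ b < σ a) (h₃ : σ a < σ d) : PermContains σ p3214 := by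
  refine ⟨![a, b, c, d], by simp [hab, hbc, hcd], fun i j => ?_⟩
  have h₁₂ := h₁.trans h₂
  have h₂₃ := h₂.trans h₃
  have h₁₃ := h₁₂.trans h₃
  fin_cases i <;> fin_cases j <;>
    simp [p3214, h₁, h₂, h₃, h₁₂, h₂₃, h₁₃, h₁.le, h₂.le, h₃.le, h₁₂.le, h₂₃.le,
      h₁₃.le]

end Occurrences

section DeleteFirst

variable {n : ℕ}

def deleteFirst (v : Fin (n + 1)) : {σ : Perm (Fin (n + 1)) // σ 0 = v} ≃ Perm (Fin n) :=
  (subtypeEquiv (equivCongr (finSuccEquiv n) (Equiv.refl _)) fun σ => by simp).trans <|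
    (optionSubtype v).trans (equivCongr (Equiv.refl _) (finSuccAboveEquiv v).symm)

lemma succAbove_deleteFirst (v : Fin (n + 1)) (σ : {σ : Perm (Fin (n + 1)) // σ 0 = v})
    (i : Fin n) : v.succAbove (deleteFirst v σ i) = σ.1 i.succ := by
  have key (y : {x // x ≠ v}) : v.succAbove ((finSuccAboveEquiv v).symm y) = y :=
    congrArg Subtype.val ((finSuccAboveEquiv v).apply_symm_apply y)
  simp [deleteFirst, key]

lemma card_apply_zero_eq_of_deleteFirst (v : Fin (n + 1)) {P : Perm (Fin (n + 1)) → Prop}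
    {Q : Perm (Fin n) → Prop} (h : ∀ σ, P σ.1 ↔ Q (deleteFirst v σ)) :
    Nat.card {σ : Perm (Fin (n + 1)) // σ 0 = v ∧ P σ} = Nat.card {τ // Q τ} :=
  Nat.card_congr <|
    (subtypeSubtypeEquivSubtypeInter _ _).symm.trans (subtypeEquiv (deleteFirst v) h)

end DeleteFirst

lemma Fin.val_le_val_of_strictMono {a b : ℕ} {f : Fin a → Fin b} (hf : StrictMono f)
    (i : Fin a) : (i : ℕ) ≤ f i := by
  obtain ⟨i, hi⟩ := i
  induction i with
  | zero => exact Nat.zero_le _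
  | succ k ih =>
    have hk := hf (Fin.mk_lt_mk.mpr k.lt_succ_self : (⟨k, by omega⟩ : Fin a) < ⟨k + 1, hi⟩)
    have := ih (by omega)
    rw [Fin.lt_def] at hk
    simp only at hk this ⊢
    omega

def PermContainsAtZero {n k : ℕ} (σ : Perm (Fin (n + 1))) (p : Fin (k + 1) → Fin (k + 1)) :
    Prop :=
  ∃ f : Fin (k + 1) → Fin (n + 1), StrictMono f ∧ f 0 = 0 ∧
    ∀ i j, p i < p j ↔ σ (f i) < σ (f j)

section SuccAbove

variable {n k : ℕ} {σ : Perm (Fin (n + 1))} {τ : Perm (Fin n)} {v : Fin (n + 1)}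

lemma PermContains.of_succAbove (H : ∀ i, v.succAbove (τ i) = σ i.succ)
    {p : Fin k → Fin k} : PermContains τ p → PermContains σ p := by
  rintro ⟨f, hf, hp⟩
  refine ⟨fun i => (f i).succ, Fin.strictMono_succ.comp hf, fun i j => ?_⟩
  rw [← H, ← H, Fin.succAbove_lt_succAbove_iff]
  exact hp i j

lemma PermContains.succAbove_or_atZero (H : ∀ i, v.succAbove (τ i) = σ i.succ)
    {p : Fin (k + 1) → Fin (k + 1)} :
    PermContains σ p → PermContains τ p ∨ PermContainsAtZero σ p := by
  rintro ⟨f, hf, hp⟩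
  by_cases h0 : f 0 = 0
  · exact Or.inr ⟨f, hf, h0, hp⟩
  have hne (i : Fin (k + 1)) : f i ≠ 0 :=
    fun hi => h0 (nonpos_iff_eq_zero.mp (hi ▸ hf.monotone (Fin.zero_le i)))
  refine Or.inl ⟨fun i => (f i).pred (hne i), fun i j hij => ?_, fun i j => ?_⟩
  · simpa [Fin.pred_lt_pred_iff] using hf hij
  · rw [← Fin.succAbove_lt_succAbove_iff (p := v), H, H, Fin.succ_pred, Fin.succ_pred]
    exact hp i j

lemma permAvoids_iff_of_succAbove (H : ∀ i, v.succAbove (τ i) = σ i.succ)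
    {p : Fin (k + 1) → Fin (k + 1)} (h0 : ¬ PermContainsAtZero σ p) :
    PermAvoids σ p ↔ PermAvoids τ p :=
  ⟨mt (PermContains.of_succAbove H), fun hτ hσ => (hσ.succAbove_or_atZero H).elim hτ h0⟩

end SuccAbove

section PermContainsAtZero

variable {n k : ℕ} {p : Fin (k + 1) → Fin (k + 1)}

lemma not_permContainsAtZero_of_eq_last {σ : Perm (Fin (n + 1))} (h0 : σ 0 = Fin.last n)
    {j : Fin (k + 1)} (hj : p 0 < p j) : ¬ PermContainsAtZero σ p := by
  rintro ⟨f, -, hf0, hp⟩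
  have := (hp 0 j).mp hj
  rw [hf0, h0] at this
  exact (Fin.le_last _).not_gt this

lemma PermContainsAtZero.apply_eq_last {σ : Perm (Fin (n + 2))}
    (h0 : σ 0 = (Fin.last n).castSucc) (hσ : PermContainsAtZero σ p) :
    ∃ f : Fin (k + 1) → Fin (n + 2),
      StrictMono f ∧ ∀ j, p 0 < p j → σ (f j) = Fin.last (n + 1) := by
  obtain ⟨f, hf, hf0, hp⟩ := hσ
  refine ⟨f, hf, fun j hj => ?_⟩
  have := (hp 0 j).mp hj
  rw [hf0, h0, Fin.castSucc_lt_iff_succ_le, Fin.succ_last] at this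
  exact Fin.last_le_iff.mp this

lemma not_permContainsAtZero_of_two_lt {σ : Perm (Fin (n + 2))}
    (h0 : σ 0 = (Fin.last n).castSucc) {j₁ j₂ : Fin (k + 1)} (hj₁ : p 0 < p j₁)
    (hj₂ : p 0 < p j₂) (hj : j₁ ≠ j₂) : ¬ PermContainsAtZero σ p := by
  intro hσ
  obtain ⟨f, hf, hlast⟩ := hσ.apply_eq_last h0
  exact hj (hf.injective (σ.injective ((hlast j₁ hj₁).trans (hlast j₂ hj₂).symm)))

lemma not_permContainsAtZero_of_lt {σ : Perm (Fin (n + 2))}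
    (h0 : σ 0 = (Fin.last n).castSucc) {t : Fin (n + 2)} (ht : σ t = Fin.last (n + 1))
    {j : Fin (k + 1)} (hj : p 0 < p j) (htj : (t : ℕ) < j) : ¬ PermContainsAtZero σ p := by
  intro hσ
  obtain ⟨f, hf, hlast⟩ := hσ.apply_eq_last h0
  have : f j = t := σ.injective ((hlast j hj).trans ht.symm)
  have := Fin.val_le_val_of_strictMono hf j
  omega

end PermContainsAtZero

def Avoids123132And3214 {n : ℕ} (σ : Perm (Fin n)) : Prop :=
  PermAvoids σ p123 ∧ PermAvoids σ p132 ∧ PermAvoids σ p3214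

section Avoids123132And3214

variable {n : ℕ}

lemma avoids123132And3214_iff_of_eq_last {σ : Perm (Fin (n + 1))} {τ : Perm (Fin n)}
    (H : ∀ i, (Fin.last n).succAbove (τ i) = σ i.succ) (h0 : σ 0 = Fin.last n) :
    Avoids123132And3214 σ ↔ Avoids123132And3214 τ := by
  refine and_congr ?_ (and_congr ?_ ?_) <;> refine permAvoids_iff_of_succAbove H ?_
  · exact not_permContainsAtZero_of_eq_last h0 (j := 1) (by decide)
  · exact not_permContainsAtZero_of_eq_last h0 (j := 1) (by decide)
  · exact not_permContainsAtZero_of_eq_last h0 (j := 3) (by decide)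

-- The only entry above `σ 0` sits at position `t < 3`, too early to be the `4` of a 3214, and
-- 123 and 132 need two entries above their first one.
lemma avoids123132And3214_iff_of_eq_castSucc_last {σ : Perm (Fin (n + 2))}
    {τ : Perm (Fin (n + 1))}
    (H : ∀ i, (Fin.last n).castSucc.succAbove (τ i) = σ i.succ)
    (h0 : σ 0 = (Fin.last n).castSucc) {t : Fin (n + 2)} (ht : σ t = Fin.last (n + 1))
    (ht3 : (t : ℕ) < 3) :
    Avoids123132And3214 σ ↔ Avoids123132And3214 τ := by
  refine and_congr ?_ (and_congr ?_ ?_) <;> refine permAvoids_iff_of_succAbove H ?_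
  iterate 2
    exact not_permContainsAtZero_of_two_lt h0 (j₁ := 1) (j₂ := 2) (by decide) (by decide)
      (by decide)
  · exact not_permContainsAtZero_of_lt h0 ht (j := 3) (by decide) ht3

end Avoids123132And3214

section FirstEntries

variable {n : ℕ}

lemma eq_of_lt_of_lt_of_permAvoids {σ : Perm (Fin n)} (h123 : PermAvoids σ p123)
    (h132 : PermAvoids σ p132) {i j k : Fin n} (hij : i < j) (hik : i < k) (hj : σ i < σ j)
    (hk : σ i < σ k) : j = k := by
  by_contra hne
  wlog hjk : j < k generalizing j k
  · exact this hik hij hk hj (Ne.symm hne) ((Ne.lt_or_gt hne).resolve_left hjk)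
  rcases lt_or_gt_of_ne (σ.injective.ne hne) with h | h
  · exact h123 (permContains_p123 σ hij hjk hj h)
  · exact h132 (permContains_p132 σ hij hjk hk h)

lemma eq_of_lt_of_lt_symm_of_permAvoids {σ : Perm (Fin n)} (h123 : PermAvoids σ p123)
    (h132 : PermAvoids σ p132) {i u w : Fin n} (hu : σ i < u) (hw : σ i < w)
    (hiu : i < σ.symm u) (hiw : i < σ.symm w) : u = w :=
  σ.symm.injective <| eq_of_lt_of_lt_of_permAvoids h123 h132 hiu hiw (by simpa) (by simpa)

lemma apply_zero_eq_of_permAvoids {σ : Perm (Fin (n + 2))} (h123 : PermAvoids σ p123)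
    (h132 : PermAvoids σ p132) : σ 0 = Fin.last (n + 1) ∨ σ 0 = (Fin.last n).castSucc := by
  by_contra! h
  have hsymm {u : Fin (n + 2)} (hu : u ≠ σ 0) : 0 < σ.symm u :=
    Fin.pos_iff_ne_zero.mpr (σ.symm_apply_eq.not.mpr hu)
  refine absurd (eq_of_lt_of_lt_symm_of_permAvoids h123 h132 (i := 0) (u := Fin.last (n + 1))
    (w := (Fin.last n).castSucc) ?_ ?_ (hsymm h.1.symm) (hsymm h.2.symm)) ?_
  all_goals
    simp only [ne_eq, Fin.ext_iff, Fin.lt_def, Fin.val_last, Fin.val_castSucc] at h ⊢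
    omega

lemma apply_one_eq_of_permAvoids {σ : Perm (Fin (n + 3))} (h123 : PermAvoids σ p123)
    (h132 : PermAvoids σ p132) (h0 : σ 0 = (Fin.last (n + 1)).castSucc) :
    σ 1 = Fin.last (n + 2) ∨ σ 1 = (Fin.last n).castSucc.castSucc := by
  by_contra! h
  have h10 : σ 1 ≠ σ 0 := σ.injective.ne one_ne_zero
  have hsymm {u : Fin (n + 3)} (hu0 : u ≠ σ 0) (hu1 : u ≠ σ 1) : 1 < σ.symm u := by
    have h0' := σ.symm_apply_eq.not.mpr hu0
    have h1' := σ.symm_apply_eq.not.mpr hu1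
    simp only [Fin.ext_iff, Fin.lt_def, Fin.val_zero, Fin.val_one] at h0' h1' ⊢
    omega
  refine absurd (eq_of_lt_of_lt_symm_of_permAvoids h123 h132 (i := 1) (u := Fin.last (n + 2))
    (w := (Fin.last n).castSucc.castSucc) ?_ ?_ (hsymm ?_ h.1.symm) (hsymm ?_ h.2.symm)) ?_
  all_goals
    simp only [h0, ne_eq, Fin.ext_iff, Fin.lt_def, Fin.val_last, Fin.val_castSucc] at h h10 ⊢
    omega

lemma apply_two_eq_of_permAvoids {σ : Perm (Fin (n + 3))} (h3214 : PermAvoids σ p3214)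
    (h0 : σ 0 = (Fin.last (n + 1)).castSucc) (h1 : σ 1 = (Fin.last n).castSucc.castSucc) :
    σ 2 = Fin.last (n + 2) := by
  by_contra h2
  have h20 : σ 2 ≠ σ 0 := σ.injective.ne (by simp only [ne_eq, Fin.ext_iff, Fin.val_two]; simp)
  have h21 : σ 2 ≠ σ 1 := σ.injective.ne (by simp only [ne_eq, Fin.ext_iff, Fin.val_two]; simp)
  have hsymm {u : Fin (n + 3)} (hu0 : u ≠ σ 0) (hu1 : u ≠ σ 1) (hu2 : u ≠ σ 2) :
      2 < σ.symm u := by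
    have h0' := σ.symm_apply_eq.not.mpr hu0
    have h1' := σ.symm_apply_eq.not.mpr hu1
    have h2' := σ.symm_apply_eq.not.mpr hu2
    simp only [Fin.ext_iff, Fin.lt_def, Fin.val_zero, Fin.val_one, Fin.val_two] at h0' h1' h2' ⊢
    omega
  refine h3214 (permContains_p3214 σ (a := 0) (b := 1) (c := 2) (d := σ.symm (Fin.last (n + 2)))
    ?_ ?_ (hsymm ?_ ?_ (Ne.symm h2)) ?_ ?_ ?_)
  all_goals
    simp only [h0, h1, apply_symm_apply, ne_eq, Fin.ext_iff, Fin.lt_def, Fin.val_last,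
      Fin.val_castSucc, Fin.val_zero, Fin.val_one, Fin.val_two] at h2 h20 h21 ⊢
    omega

lemma apply_one_eq_last_and_apply_zero_ne_last_iff {σ : Perm (Fin (n + 3))} :
    σ 1 = Fin.last (n + 2) ∧ σ 0 ≠ Fin.last (n + 2) ∧ Avoids123132And3214 σ ↔
      σ 0 = (Fin.last (n + 1)).castSucc ∧ σ 1 = Fin.last (n + 2) ∧
        Avoids123132And3214 σ := by
  constructor
  · rintro ⟨h1, h0, hσ⟩
    exact ⟨(apply_zero_eq_of_permAvoids hσ.1 hσ.2.1).resolve_left h0, h1, hσ⟩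
  · rintro ⟨h0, h1, hσ⟩
    exact ⟨h1, h0 ▸ (Fin.castSucc_lt_last _).ne, hσ⟩

lemma apply_one_ne_last_and_apply_zero_ne_last_iff {σ : Perm (Fin (n + 3))} :
    σ 1 ≠ Fin.last (n + 2) ∧ σ 0 ≠ Fin.last (n + 2) ∧ Avoids123132And3214 σ ↔
      σ 0 = (Fin.last (n + 1)).castSucc ∧ σ 1 = (Fin.last n).castSucc.castSucc ∧
        σ 2 = Fin.last (n + 2) ∧ Avoids123132And3214 σ := by
  constructor
  · rintro ⟨h1, h0, hσ⟩
    have h0' := (apply_zero_eq_of_permAvoids hσ.1 hσ.2.1).resolve_left h0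
    have h1' := (apply_one_eq_of_permAvoids hσ.1 hσ.2.1 h0').resolve_left h1
    exact ⟨h0', h1', apply_two_eq_of_permAvoids hσ.2.2 h0' h1', hσ⟩
  · rintro ⟨h0, h1, -, hσ⟩
    exact ⟨h1 ▸ (Fin.castSucc_lt_last _).ne, h0 ▸ (Fin.castSucc_lt_last _).ne, hσ⟩

end FirstEntries

section Counting

variable {n : ℕ}

lemma Nat.card_subtype_eq_add_not {α : Type*} [Finite α] (P Q : α → Prop) :
    Nat.card {x // P x} = Nat.card {x // Q x ∧ P x} + Nat.card {x // ¬ Q x ∧ P x} := by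
  classical
  rw [← Nat.card_sum]
  exact Nat.card_congr <| (sumCompl fun x : {x // P x} => Q x).symm.trans <|
    ((subtypeSubtypeEquivSubtypeInter P Q).trans (subtypeEquivRight fun _ => and_comm)).sumCongr
      ((subtypeSubtypeEquivSubtypeInter P (¬ Q ·)).trans (subtypeEquivRight fun _ => and_comm))

lemma card_avoids_apply_zero_eq_last :
    Nat.card {σ : Perm (Fin (n + 1)) // σ 0 = Fin.last n ∧ Avoids123132And3214 σ} =
      Nat.card {τ : Perm (Fin n) // Avoids123132And3214 τ} :=
  card_apply_zero_eq_of_deleteFirst _ fun σ =>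
    avoids123132And3214_iff_of_eq_last (succAbove_deleteFirst _ σ) σ.2

lemma card_avoids_apply_zero_one :
    Nat.card {σ : Perm (Fin (n + 2)) //
        σ 0 = (Fin.last n).castSucc ∧ σ 1 = Fin.last (n + 1) ∧ Avoids123132And3214 σ} =
      Nat.card {τ : Perm (Fin (n + 1)) // τ 0 = Fin.last n ∧ Avoids123132And3214 τ} := by
  refine card_apply_zero_eq_of_deleteFirst _ fun σ => ?_
  have h1 : σ.1 1 = Fin.last (n + 1) ↔ deleteFirst _ σ 0 = Fin.last n := by
    rw [← Fin.succ_zero_eq_one, ← succAbove_deleteFirst,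
      Fin.succAbove_eq_last_iff (Fin.castSucc_lt_last _).ne]
  exact (and_congr_right fun h =>
    avoids123132And3214_iff_of_eq_castSucc_last (succAbove_deleteFirst _ σ) σ.2 h (by simp)).trans
      (and_congr_left' h1)

lemma card_avoids_apply_zero_one_two :
    Nat.card {σ : Perm (Fin (n + 3)) // σ 0 = (Fin.last (n + 1)).castSucc ∧
        σ 1 = (Fin.last n).castSucc.castSucc ∧ σ 2 = Fin.last (n + 2) ∧
          Avoids123132And3214 σ} =
      Nat.card {τ : Perm (Fin (n + 2)) //
        τ 0 = (Fin.last n).castSucc ∧ τ 1 = Fin.last (n + 1) ∧ Avoids123132And3214 τ} := by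
  refine card_apply_zero_eq_of_deleteFirst _ fun σ => ?_
  have h1 : σ.1 1 = (Fin.last n).castSucc.castSucc ↔
      deleteFirst _ σ 0 = (Fin.last n).castSucc := by
    rw [← Fin.succ_zero_eq_one, ← succAbove_deleteFirst,
      ← Fin.succAbove_castSucc_of_lt _ _ (Fin.castSucc_lt_last (Fin.last n)),
      Fin.succAbove_right_inj]
  have h2 : σ.1 2 = Fin.last (n + 2) ↔ deleteFirst _ σ 1 = Fin.last (n + 1) := by
    rw [← Fin.succ_one_eq_two, ← succAbove_deleteFirst,
      Fin.succAbove_eq_last_iff (Fin.castSucc_lt_last _).ne]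
  exact and_congr h1 <| (and_congr_right fun h =>
    avoids123132And3214_iff_of_eq_castSucc_last (succAbove_deleteFirst _ σ) σ.2 h
      (by simp only [Fin.val_two]; omega)).trans
      (and_congr_left' h2)

end Counting

lemma card_avoids123132And3214_add_three (n : ℕ) :
    Nat.card {σ : Perm (Fin (n + 3)) // Avoids123132And3214 σ} =
      Nat.card {σ : Perm (Fin (n + 2)) // Avoids123132And3214 σ} +
        Nat.card {σ : Perm (Fin (n + 1)) // Avoids123132And3214 σ} +
          Nat.card {σ : Perm (Fin n) // Avoids123132And3214 σ} := by
  rw [Nat.card_subtype_eq_add_not _ (fun σ : Perm (Fin (n + 3)) => σ 0 = Fin.last (n + 2)),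
    Nat.card_subtype_eq_add_not
      (fun σ : Perm (Fin (n + 3)) => σ 0 ≠ Fin.last (n + 2) ∧ Avoids123132And3214 σ)
      (fun σ => σ 1 = Fin.last (n + 2)),
    Nat.card_congr (subtypeEquivRight fun _ => apply_one_eq_last_and_apply_zero_ne_last_iff),
    Nat.card_congr (subtypeEquivRight fun _ => apply_one_ne_last_and_apply_zero_ne_last_iff),
    card_avoids_apply_zero_eq_last, card_avoids_apply_zero_one_two,
    card_avoids_apply_zero_one, card_avoids_apply_zero_one, card_avoids_apply_zero_eq_last,
    card_avoids_apply_zero_eq_last, add_assoc]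

theorem stmt1 (a : ℕ → ℕ)
    (ha : ∀ n, a n = Nat.card {σ : Equiv.Perm (Fin n) //
      PermAvoids σ p123 ∧ PermAvoids σ p132 ∧ PermAvoids σ (![2, 1, 0, 3] : Fin 4 → Fin 4)}) :
    ∀ n, 5 ≤ n → a n = a (n - 1) + a (n - 2) + a (n - 3) := by
  intro n hn
  obtain ⟨m, rfl⟩ : ∃ m, n = m + 3 := ⟨n - 3, by omega⟩
  rw [ha, ha, ha, ha]
  exact card_avoids123132And3214_add_three m
end

section
/- The number of permutations in S_n avoiding all three patterns 123, 132, and 3241 equals f_{n+2} − 1 for all n ≥ 1, where f_n is the n-th Fibonacci number (f_1 = f_2 = 1). -/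
/-!
Avoiding both 123 and 132 says that every entry has at most one larger entry to its right.
Split a permutation of `{0, …, n + 2}` in the class at its maximum `n + 2`. If nothing precedes
the maximum, the rest is an arbitrary member of size `n + 2`. If one entry precedes it, that entry
is `n + 1` (otherwise `n + 1` comes later and forms a 132), and the rest is an arbitrary member of
size `n + 1`. If two entries `x, y` precede it, then nothing can follow it: a later `c` would give
`c < y < x < n + 2`, a 3241; and then the entries before the maximum decrease, so the permutation
is `n + 1, n, …, 0, n + 2`. So the number `a n` of such permutations of size `n` satisfies
`a (n + 3) = a (n + 2) + a (n + 1) + 1` with `a 1 = 1`, `a 2 = 2`, whence `a n = fib (n + 2) - 1`.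
-/

open List

theorem List.ofFn_sublist_ofFn_iff {α : Type*} {k n : ℕ} {g : Fin k → α} {h : Fin n → α} :
    ofFn g <+ ofFn h ↔ ∃ e : Fin k ↪o Fin n, ∀ i, g i = h (e i) := by
  rw [sublist_iff_exists_fin_orderEmbedding_get_eq]
  constructor
  · rintro ⟨e, he⟩
    refine ⟨((Fin.castOrderIso length_ofFn).symm.toOrderEmbedding.trans e).trans
      (Fin.castOrderIso length_ofFn).toOrderEmbedding, fun i => ?_⟩
    simpa [Fin.cast] using he (Fin.cast length_ofFn.symm i)
  · rintro ⟨e, he⟩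
    refine ⟨((Fin.castOrderIso length_ofFn).toOrderEmbedding.trans e).trans
      (Fin.castOrderIso length_ofFn).symm.toOrderEmbedding, fun i => ?_⟩
    simpa [Fin.cast] using he (Fin.cast length_ofFn i)

theorem List.Sublist.of_append_singleton_append_singleton {α : Type*} {l v : List α} {a b : α}
    (h : l ++ [a] <+ v ++ [b]) : l <+ v := by
  have h' : a :: l.reverse <+ b :: v.reverse := by simpa using h.reverse
  simpa using h'.of_cons_cons

theorem List.cons_perm_range_succ_iff {n : ℕ} {t : List ℕ} :
    n :: t ~ range (n + 1) ↔ t ~ range n := by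
  rw [range_succ, ← perm_append_right_iff (l₁ := t) (l₂ := range n) [n]]
  exact ⟨(perm_append_singleton n t).trans, (perm_append_singleton n t).symm.trans⟩

theorem List.Pairwise.eq_reverse_range {l : List ℕ} {n : ℕ} (hl : l.Pairwise (· > ·))
    (hp : l ~ range n) : l = (range n).reverse :=
  hp.trans (reverse_perm _).symm |>.eq_of_pairwise' hl (pairwise_reverse.2 pairwise_lt_range)

def ListContains {k : ℕ} (l : List ℕ) (p : Fin k → Fin k) : Prop :=
  ∃ f : Fin k → ℕ, ofFn f <+ l ∧ ∀ i j, p i < p j ↔ f i < f j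

theorem ListContains.mono {k : ℕ} {l l' : List ℕ} {p : Fin k → Fin k}
    (h : ListContains l p) (hl : l <+ l') : ListContains l' p :=
  let ⟨f, hf, hp⟩ := h
  ⟨f, hf.trans hl, hp⟩

theorem ListContains.le_length {k : ℕ} {l : List ℕ} {p : Fin k → Fin k}
    (h : ListContains l p) : k ≤ l.length := by
  obtain ⟨f, hf, -⟩ := h
  simpa using hf.length_le

def oneLine {n : ℕ} (σ : Equiv.Perm (Fin n)) : List ℕ := ofFn fun i => (σ i : ℕ)

theorem permContains_iff_listContains_oneLine {n k : ℕ} (σ : Equiv.Perm (Fin n))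
    (p : Fin k → Fin k) : PermContains σ p ↔ ListContains (oneLine σ) p := by
  constructor
  · rintro ⟨f, hf, hp⟩
    exact ⟨fun i => σ (f i),
      ofFn_sublist_ofFn_iff.2 ⟨OrderEmbedding.ofStrictMono f hf, fun _ => rfl⟩, hp⟩
  · rintro ⟨g, hg, hp⟩
    obtain ⟨e, he⟩ := ofFn_sublist_ofFn_iff.1 hg
    exact ⟨e, e.strictMono, fun i j => by rw [hp, he, he]; rfl⟩

theorem oneLine_injective (n : ℕ) : Function.Injective (oneLine (n := n)) :=
  fun _ _ h => Equiv.ext fun i => Fin.ext (congrFun (ofFn_injective h) i)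

theorem oneLine_perm_range {n : ℕ} (σ : Equiv.Perm (Fin n)) : oneLine σ ~ range n := by
  have : ofFn (fun i : Fin n => (i : ℕ)) = range n := ext_getElem (by simp) (by simp)
  exact this ▸ σ.ofFn_comp_perm Fin.val

theorem exists_oneLine_eq {n : ℕ} {l : List ℕ} (hl : l ~ range n) :
    ∃ σ : Equiv.Perm (Fin n), oneLine σ = l := by
  obtain rfl : l.length = n := by simpa using hl.length_eq
  have hlt : ∀ i : Fin l.length, l[i] < l.length := fun i => by
    simpa using hl.mem_iff.1 (getElem_mem i.2)
  have hinj : Function.Injective fun i : Fin l.length => (⟨l[i], hlt i⟩ : Fin l.length) :=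
    fun i j h => Fin.ext ((hl.nodup_iff.2 nodup_range).getElem_inj_iff.1 (Fin.mk.inj h))
  exact ⟨Equiv.ofBijective _ (Finite.injective_iff_bijective.1 hinj), ofFn_getElem⟩

def p3241 : Fin 4 → Fin 4 := ![2, 1, 3, 0]

section Patterns

variable {l : List ℕ}

theorem listContains_p123_iff :
    ListContains l p123 ↔ ∃ a b c, [a, b, c] <+ l ∧ a < b ∧ b < c := by
  constructor
  · rintro ⟨f, hs, h⟩
    exact ⟨f 0, f 1, f 2, by simpa [ofFn_succ] using hs, (h 0 1).1 (by decide),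
      (h 1 2).1 (by decide)⟩
  · rintro ⟨a, b, c, hs, hab, hbc⟩
    refine ⟨![a, b, c], by simpa [ofFn_succ] using hs, ?_⟩
    simp only [Fin.forall_fin_succ, IsEmpty.forall_iff, and_true, p123, Matrix.cons_val_zero,
      Matrix.cons_val_succ]
    omega

theorem listContains_p132_iff :
    ListContains l p132 ↔ ∃ a b c, [a, b, c] <+ l ∧ a < c ∧ c < b := by
  constructor
  · rintro ⟨f, hs, h⟩
    exact ⟨f 0, f 1, f 2, by simpa [ofFn_succ] using hs, (h 0 2).1 (by decide),
      (h 2 1).1 (by decide)⟩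
  · rintro ⟨a, b, c, hs, hac, hcb⟩
    refine ⟨![a, b, c], by simpa [ofFn_succ] using hs, ?_⟩
    simp only [Fin.forall_fin_succ, IsEmpty.forall_iff, and_true, p132, Matrix.cons_val_zero,
      Matrix.cons_val_succ]
    omega

theorem listContains_p3241_iff :
    ListContains l p3241 ↔ ∃ a b c d, [a, b, c, d] <+ l ∧ d < b ∧ b < a ∧ a < c := by
  constructor
  · rintro ⟨f, hs, h⟩
    exact ⟨f 0, f 1, f 2, f 3, by simpa [ofFn_succ] using hs, (h 3 1).1 (by decide),
      (h 1 0).1 (by decide), (h 0 2).1 (by decide)⟩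
  · rintro ⟨a, b, c, d, hs, hdb, hba, hac⟩
    refine ⟨![a, b, c, d], by simpa [ofFn_succ] using hs, ?_⟩
    simp only [Fin.forall_fin_succ, IsEmpty.forall_iff, and_true, p3241, Matrix.cons_val_zero,
      Matrix.cons_val_succ]
    omega

end Patterns

def AvoidsPatterns (l : List ℕ) : Prop :=
  ¬ ListContains l p123 ∧ ¬ ListContains l p132 ∧ ¬ ListContains l p3241

theorem avoidsPatterns_oneLine_iff {n : ℕ} (σ : Equiv.Perm (Fin n)) :
    AvoidsPatterns (oneLine σ) ↔ PermAvoids σ p123 ∧ PermAvoids σ p132 ∧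
      PermAvoids σ (![2, 1, 3, 0] : Fin 4 → Fin 4) := by
  simp only [AvoidsPatterns, PermAvoids, permContains_iff_listContains_oneLine]
  rfl

namespace AvoidsPatterns

variable {l l' t v : List ℕ}

theorem sublist (h : AvoidsPatterns l) (hl : l' <+ l) : AvoidsPatterns l' :=
  ⟨fun h' => h.1 (h'.mono hl), fun h' => h.2.1 (h'.mono hl), fun h' => h.2.2 (h'.mono hl)⟩

theorem of_length_le_two (hl : l.length ≤ 2) : AvoidsPatterns l := by
  refine ⟨fun h => ?_, fun h => ?_, fun h => ?_⟩ <;> have := h.le_length <;> omega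

/-- 123 and 132 are the two ways for `a` to lie below two distinct later entries. -/
theorem cons {a : ℕ} (ht : AvoidsPatterns t)
    (h12 : ∀ y z, [y, z] <+ t → a < y → a < z → y = z)
    (h3241 : ∀ y z w, [y, z, w] <+ t → w < y → y < a → z ≤ a) :
    AvoidsPatterns (a :: t) := by
  obtain ⟨h123, h132, h3⟩ := ht
  refine ⟨?_, ?_, ?_⟩
  · rw [listContains_p123_iff] at h123 ⊢
    rintro ⟨x, y, z, hs, hxy, hyz⟩
    rcases sublist_cons_iff.1 hs with hs | ⟨r, hr, hs⟩
    · exact h123 ⟨x, y, z, hs, hxy, hyz⟩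
    · obtain ⟨rfl, rfl⟩ := cons_eq_cons.1 hr
      have := h12 y z hs hxy (hxy.trans hyz)
      omega
  · rw [listContains_p132_iff] at h132 ⊢
    rintro ⟨x, y, z, hs, hxz, hzy⟩
    rcases sublist_cons_iff.1 hs with hs | ⟨r, hr, hs⟩
    · exact h132 ⟨x, y, z, hs, hxz, hzy⟩
    · obtain ⟨rfl, rfl⟩ := cons_eq_cons.1 hr
      have := h12 y z hs (hxz.trans hzy) hxz
      omega
  · rw [listContains_p3241_iff] at h3 ⊢
    rintro ⟨x, y, z, w, hs, hwy, hyx, hxz⟩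
    rcases sublist_cons_iff.1 hs with hs | ⟨r, hr, hs⟩
    · exact h3 ⟨x, y, z, w, hs, hwy, hyx, hxz⟩
    · obtain ⟨rfl, rfl⟩ := cons_eq_cons.1 hr
      have := h3241 y z w hs hwy hyx
      omega

theorem cons_of_forall_lt {a : ℕ} (ht : AvoidsPatterns t) (ha : ∀ x ∈ t, x < a) :
    AvoidsPatterns (a :: t) :=
  ht.cons (fun y _ hs hy _ => absurd (ha y (hs.subset (by simp))) (by omega))
    (fun _ z _ hs _ _ => (ha z (hs.subset (by simp))).le)

theorem cons_cons_succ {b : ℕ} (ht : AvoidsPatterns t) (hb : ∀ x ∈ t, x < b) :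
    AvoidsPatterns (b :: (b + 1) :: t) := by
  have hb1 : ∀ x ∈ (b + 1) :: t, b < x → x = b + 1 := by
    intro x hx hbx
    rcases mem_cons.1 hx with rfl | hx
    · rfl
    · exact absurd (hb x hx) (by omega)
  refine (ht.cons_of_forall_lt fun x hx => (hb x hx).trans (by omega)).cons
    (fun y z hs hy hz => ?_) (fun y z w hs _ hy => ?_)
  · rw [hb1 y (hs.subset (by simp)) hy, hb1 z (hs.subset (by simp)) hz]
  · rcases sublist_cons_iff.1 hs with hs | ⟨r, hr, -⟩
    · exact (hb z (hs.subset (by simp))).le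
    · obtain ⟨rfl, -⟩ := cons_eq_cons.1 hr
      omega

theorem append_singleton (hv : v.Pairwise (· > ·)) (m : ℕ) : AvoidsPatterns (v ++ [m]) := by
  have hgt : ∀ x y z, [x, y, z] <+ v ++ [m] → y < x := fun x y z hs =>
    pairwise_iff_forall_sublist.1 hv (Sublist.of_append_singleton_append_singleton
      (l := [x, y]) hs)
  refine ⟨?_, ?_, ?_⟩
  · rw [listContains_p123_iff]
    rintro ⟨x, y, z, hs, hxy, -⟩
    exact absurd (hgt x y z hs) (by omega)
  · rw [listContains_p132_iff]
    rintro ⟨x, y, z, hs, hxz, hzy⟩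
    exact absurd (hgt x y z hs) (by omega)
  · rw [listContains_p3241_iff]
    rintro ⟨x, y, z, w, hs, -, -, hxz⟩
    have hs' : [x, y, z] <+ v := Sublist.of_append_singleton_append_singleton hs
    exact absurd (pairwise_iff_forall_sublist.1 hv ((show [x, z] <+ [x, y, z] by simp).trans hs'))
      (by omega)

end AvoidsPatterns

theorem pairwise_gt_of_not_listContains_p123 {v : List ℕ} {m : ℕ}
    (h : ¬ ListContains (v ++ [m]) p123) (hnd : v.Nodup) (hm : ∀ x ∈ v, x < m) :
    v.Pairwise (· > ·) := by
  refine pairwise_iff_forall_sublist.2 fun {x y} hs => ?_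
  have hxy : x ≠ y := by simpa using hs.nodup hnd
  have hym : y < m := hm y (hs.subset (by simp))
  by_contra hle
  exact h (listContains_p123_iff.2 ⟨x, y, m, hs.append_right [m], by omega, hym⟩)

theorem AvoidsPatterns.eq_nil_of_forall_le {x y m : ℕ} {v w : List ℕ}
    (h : AvoidsPatterns (x :: y :: v ++ m :: w)) (hnd : (x :: y :: v ++ m :: w).Nodup)
    (hm : ∀ z ∈ x :: y :: v ++ m :: w, z ≤ m) : w = [] := by
  obtain _ | ⟨c, w⟩ := w
  · rfl
  have hs : [x, y, m, c] <+ x :: y :: v ++ m :: c :: w :=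
    Sublist.append (l₁ := [x, y]) (by simp) (by simp)
  have hdistinct : [x, y, m, c].Nodup := hs.nodup hnd
  simp only [nodup_cons, mem_cons, not_or, not_mem_nil] at hdistinct
  have hxm := hm x (by simp)
  have hym := hm y (by simp)
  have hcm := hm c (by simp)
  have hyx : y < x := by
    by_contra hle
    exact h.1 (listContains_p123_iff.2 ⟨x, y, m,
      (show [x, y, m] <+ [x, y, m, c] by simp).trans hs, by omega, by omega⟩)
  have hcy : c < y := by
    by_contra hle
    exact h.2.1 (listContains_p132_iff.2 ⟨y, m, c,
      (show [y, m, c] <+ [x, y, m, c] by simp).trans hs, by omega, by omega⟩)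
  exact (h.2.2 (listContains_p3241_iff.2 ⟨x, y, m, c, hs, hcy, hyx, by omega⟩)).elim

theorem AvoidsPatterns.eq_cons_or_eq_cons_cons_or_eq_append {n : ℕ} {l : List ℕ}
    (h : AvoidsPatterns l) (hl : l ~ range (n + 3)) :
    (∃ t, l = (n + 2) :: t) ∨ (∃ t, l = (n + 1) :: (n + 2) :: t) ∨
      l = (range (n + 2)).reverse ++ [n + 2] := by
  have hnd : l.Nodup := hl.nodup_iff.2 nodup_range
  have hmem : ∀ x, x ∈ l ↔ x < n + 3 := by simp [hl.mem_iff]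
  obtain ⟨v, w, rfl⟩ := append_of_mem ((hmem (n + 2)).2 (by omega))
  have hv : ∀ x ∈ v, x < n + 2 := fun x hx => by
    have : x ≠ n + 2 := (nodup_append.1 hnd).2.2 x hx (n + 2) mem_cons_self
    have := (hmem x).1 (by simp [hx])
    omega
  rcases v with _ | ⟨x, _ | ⟨y, v⟩⟩
  · exact Or.inl ⟨w, rfl⟩
  · refine Or.inr (Or.inl ⟨w, ?_⟩)
    obtain rfl : x = n + 1 := by
      by_contra hx
      have hw : n + 1 ∈ w := by
        have := (hmem (n + 1)).2 (by omega)
        simp only [cons_append, nil_append, mem_cons] at this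
        exact (this.resolve_left (Ne.symm hx)).resolve_left (by omega)
      exact h.2.1 (listContains_p132_iff.2 ⟨x, n + 2, n + 1, by simpa using hw,
        by have := hv x (by simp); omega, by omega⟩)
    rfl
  · obtain rfl := h.eq_nil_of_forall_le hnd fun z hz => by
      have := (hmem z).1 hz
      omega
    refine Or.inr (Or.inr (congrArg (· ++ [n + 2]) ?_))
    refine (pairwise_gt_of_not_listContains_p123 h.1 (hnd.sublist (by simp)) hv).eq_reverse_range ?_
    rw [range_succ] at hl
    exact perm_append_right_iff _ |>.1 hl

open Classical in
noncomputable def avoidingPerms (n : ℕ) : Finset (List ℕ) :=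
  (range n).permutations.toFinset.filter AvoidsPatterns

theorem mem_avoidingPerms {n : ℕ} {l : List ℕ} :
    l ∈ avoidingPerms n ↔ l ~ range n ∧ AvoidsPatterns l := by
  simp [avoidingPerms]

theorem card_avoidingPerms_of_le_two {n : ℕ} (hn : n ≤ 2) :
    (avoidingPerms n).card = n.factorial := by
  classical
  rw [avoidingPerms, Finset.filter_true_of_mem, toFinset_card_of_nodup
    (nodup_permutations _ nodup_range), length_permutations, length_range]
  intro l hl
  have hlen := (mem_permutations.1 (mem_toFinset.1 hl)).length_eq
  exact AvoidsPatterns.of_length_le_two (by simpa [hlen])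

theorem avoidingPerms_add_three (n : ℕ) :
    avoidingPerms (n + 3) = (avoidingPerms (n + 2)).image ((n + 2) :: ·) ∪
      (avoidingPerms (n + 1)).image (fun t => (n + 1) :: (n + 2) :: t) ∪
        {(range (n + 2)).reverse ++ [n + 2]} := by
  ext l
  simp only [Finset.mem_union, Finset.mem_image, Finset.mem_singleton, mem_avoidingPerms]
  constructor
  · rintro ⟨hl, h⟩
    rcases h.eq_cons_or_eq_cons_cons_or_eq_append hl with ⟨t, rfl⟩ | ⟨t, rfl⟩ | rfl
    · exact Or.inl (Or.inl ⟨t, ⟨cons_perm_range_succ_iff.1 hl, h.sublist (by simp)⟩, rfl⟩)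
    · have hl' := cons_perm_range_succ_iff.1 ((Perm.swap (n + 2) (n + 1) t).symm.trans hl)
      exact Or.inl (Or.inr ⟨t, ⟨cons_perm_range_succ_iff.1 hl', h.sublist (by simp)⟩, rfl⟩)
    · exact Or.inr rfl
  · rintro ((⟨t, ⟨ht, h⟩, rfl⟩ | ⟨t, ⟨ht, h⟩, rfl⟩) | rfl)
    · exact ⟨cons_perm_range_succ_iff.2 ht,
        h.cons_of_forall_lt fun x hx => by simpa using ht.mem_iff.1 hx⟩
    · exact ⟨(Perm.swap _ _ _).trans
          (cons_perm_range_succ_iff.2 (cons_perm_range_succ_iff.2 ht)),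
        h.cons_cons_succ fun x hx => by simpa using ht.mem_iff.1 hx⟩
    · refine ⟨?_, AvoidsPatterns.append_singleton (pairwise_reverse.2 pairwise_lt_range) _⟩
      rw [range_succ (n := n + 2)]
      exact (reverse_perm _).append_right _

theorem card_avoidingPerms_add_three (n : ℕ) :
    (avoidingPerms (n + 3)).card =
      (avoidingPerms (n + 2)).card + (avoidingPerms (n + 1)).card + 1 := by
  rw [avoidingPerms_add_three, Finset.card_union_of_disjoint, Finset.card_union_of_disjoint,
    Finset.card_image_of_injective _ cons_injective,
    Finset.card_image_of_injective _ fun _ _ h => by simpa using h, Finset.card_singleton]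
  · simp [Finset.disjoint_left]
  · simp [range_succ]

theorem card_avoidingPerms {n : ℕ} (hn : 1 ≤ n) :
    (avoidingPerms n).card = Nat.fib (n + 2) - 1 := by
  obtain ⟨m, rfl⟩ : ∃ m, n = m + 1 := ⟨n - 1, by omega⟩
  induction m using Nat.twoStepInduction with
  | zero => rw [card_avoidingPerms_of_le_two (by norm_num)]; rfl
  | one => rw [card_avoidingPerms_of_le_two (by norm_num)]; rfl
  | more m ih₁ ih₂ =>
    have h₁ : (avoidingPerms (m + 1)).card = Nat.fib (m + 3) - 1 := ih₁ (by omega)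
    have h₂ : (avoidingPerms (m + 2)).card = Nat.fib (m + 4) - 1 := ih₂ (by omega)
    have hrec : Nat.fib (m + 5) = Nat.fib (m + 3) + Nat.fib (m + 4) := Nat.fib_add_two
    have := Nat.fib_pos.2 (show 0 < m + 3 by omega)
    have := Nat.fib_pos.2 (show 0 < m + 4 by omega)
    show (avoidingPerms (m + 3)).card = Nat.fib (m + 5) - 1
    rw [card_avoidingPerms_add_three, h₁, h₂]
    omega

theorem card_permAvoids_eq_card_avoidingPerms (n : ℕ) :
    Nat.card {σ : Equiv.Perm (Fin n) // PermAvoids σ p123 ∧ PermAvoids σ p132 ∧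
      PermAvoids σ (![2, 1, 3, 0] : Fin 4 → Fin 4)} = (avoidingPerms n).card := by
  classical
  rw [Nat.card_eq_fintype_card, Fintype.card_subtype,
    ← Finset.card_image_of_injective _ (oneLine_injective n)]
  congr 1
  ext l
  simp only [Finset.mem_image, Finset.mem_filter, Finset.mem_univ, true_and, mem_avoidingPerms]
  constructor
  · rintro ⟨σ, hσ, rfl⟩
    exact ⟨oneLine_perm_range σ, (avoidsPatterns_oneLine_iff σ).2 hσ⟩
  · rintro ⟨hl, h⟩
    obtain ⟨σ, rfl⟩ := exists_oneLine_eq hl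
    exact ⟨σ, (avoidsPatterns_oneLine_iff σ).1 h, rfl⟩

theorem stmt2 :
    ∀ n, 1 ≤ n → Nat.card {σ : Equiv.Perm (Fin n) //
      PermAvoids σ p123 ∧ PermAvoids σ p132 ∧ PermAvoids σ (![2, 1, 3, 0] : Fin 4 → Fin 4)}
      = Nat.fib (n + 2) - 1 :=
  fun n hn => (card_permAvoids_eq_card_avoidingPerms n).trans (card_avoidingPerms hn)
end

section
/- The number of permutations in S_n avoiding all three patterns 123, 132, and 3412 equals C(n,2) + 1 for all n ≥ 1. -/
/-! ### Auxiliary development -/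

namespace Stmt3Aux

open Equiv

/-- the value function of the permutation `σ_{a,b}` -/
def F (n a b i : ℕ) : ℕ :=
  if i = b then n - 1 - a
  else if i < a ∨ b < i then n - 1 - i
  else n - 2 - i

lemma F_lt {n : ℕ} (a b i : ℕ) (hi : i < n) : F n a b i < n := by
  unfold F; split_ifs <;> omega

lemma F_inj {n a b : ℕ} (hab : a ≤ b) (hb : b < n) {i j : ℕ} (hi : i < n) (hj : j < n)
    (h : F n a b i = F n a b j) : i = j := by
  unfold F at h; split_ifs at h <;> omega

/-- the permutation `σ_{a,b}` : reverse order, except the value `n-1-a` sits at position `b`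
and values in between shift. -/
noncomputable def sig {n : ℕ} (a b : ℕ) (hab : a ≤ b) (hb : b < n) : Equiv.Perm (Fin n) :=
  Equiv.ofBijective (fun i => (⟨F n a b i, F_lt a b i i.isLt⟩ : Fin n))
    (Finite.injective_iff_bijective.mp (fun i j h => by
      apply Fin.ext
      exact F_inj hab hb i.isLt j.isLt (by simpa [Fin.ext_iff] using h)))

lemma sig_apply {n : ℕ} (a b : ℕ) (hab : a ≤ b) (hb : b < n) (i : Fin n) :
    ((sig a b hab hb i : Fin n) : ℕ) = F n a b i := rfl

/-- Key: the only non-inversions of `σ_{a,b}` are the pairs `(i, b)` with `a ≤ i < b`. -/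
lemma sig_lt_iff {n : ℕ} {a b : ℕ} (hab : a ≤ b) (hb : b < n) {i j : Fin n} (hij : i < j) :
    sig a b hab hb i < sig a b hab hb j ↔ ((j : ℕ) = b ∧ a ≤ (i : ℕ)) := by
  have hi := i.isLt
  have hj := j.isLt
  have hij' : (i : ℕ) < (j : ℕ) := hij
  rw [Fin.lt_def, sig_apply, sig_apply]
  unfold F
  split_ifs <;> omega

/-! #### Pattern containment from explicit points -/

lemma strictMono3 {n : ℕ} {x y z : Fin n} (hxy : x < y) (hyz : y < z) :
    StrictMono ![x, y, z] := by
  intro i j hij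
  fin_cases i <;> fin_cases j <;>
    simp_all [Matrix.cons_val_zero, Matrix.cons_val_one, Matrix.head_cons] <;>
    first
      | exact hxy
      | exact hyz
      | exact hxy.trans hyz
      | exact absurd hij (by decide)

lemma strictMono4 {n : ℕ} {w x y z : Fin n} (hwx : w < x) (hxy : x < y) (hyz : y < z) :
    StrictMono ![w, x, y, z] := by
  intro i j hij
  fin_cases i <;> fin_cases j <;>
    simp_all [Matrix.cons_val_zero, Matrix.cons_val_one, Matrix.head_cons] <;>
    first
      | exact hwx
      | exact hxy
      | exact hyz
      | exact hwx.trans hxy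
      | exact hxy.trans hyz
      | exact (hwx.trans hxy).trans hyz
      | exact absurd hij (by decide)

lemma contains123 {n : ℕ} (σ : Equiv.Perm (Fin n)) {x y z : Fin n}
    (hxy : x < y) (hyz : y < z) (h1 : σ x < σ y) (h2 : σ y < σ z) :
    PermContains σ p123 := by
  refine ⟨![x, y, z], strictMono3 hxy hyz, ?_⟩
  intro i j
  fin_cases i <;> fin_cases j <;>
    simp_all [p123, Matrix.cons_val_zero, Matrix.cons_val_one, Matrix.head_cons] <;>
    first
      | exact h1
      | exact h2
      | exact h1.trans h2
      | exact absurd ‹_› (by decide)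
      | (intro h; exact absurd h (by decide))
      | omega

lemma contains132 {n : ℕ} (σ : Equiv.Perm (Fin n)) {x y z : Fin n}
    (hxy : x < y) (hyz : y < z) (h1 : σ x < σ z) (h2 : σ z < σ y) :
    PermContains σ p132 := by
  refine ⟨![x, y, z], strictMono3 hxy hyz, ?_⟩
  intro i j
  fin_cases i <;> fin_cases j <;>
    simp_all [p132, Matrix.cons_val_zero, Matrix.cons_val_one, Matrix.head_cons] <;>
    first
      | exact h1
      | exact h2
      | exact h1.trans h2
      | exact absurd ‹_› (by decide)
      | (intro h; exact absurd h (by decide))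
      | omega

lemma contains3412 {n : ℕ} (σ : Equiv.Perm (Fin n)) {w x y z : Fin n}
    (hwx : w < x) (hxy : x < y) (hyz : y < z)
    (h1 : σ y < σ z) (h2 : σ z < σ w) (h3 : σ w < σ x) :
    PermContains σ (![2, 3, 0, 1] : Fin 4 → Fin 4) := by
  refine ⟨![w, x, y, z], strictMono4 hwx hxy hyz, ?_⟩
  intro i j
  fin_cases i <;> fin_cases j <;>
    simp_all [Matrix.cons_val_zero, Matrix.cons_val_one, Matrix.head_cons] <;>
    first
      | exact h1
      | exact h2
      | exact h3
      | exact h1.trans h2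
      | exact h2.trans h3
      | exact (h1.trans h2).trans h3
      | exact absurd ‹_› (by decide)
      | (intro h; exact absurd h (by decide))
      | omega

/-- Two permutations with the same relative order are equal. -/
lemma perm_eq_of_lt_iff {n : ℕ} (σ τ : Equiv.Perm (Fin n))
    (h : ∀ i j : Fin n, σ i < σ j ↔ τ i < τ j) : σ = τ := by
  have he : ({ toEquiv := τ.symm.trans σ
               map_rel_iff' := by
                 intro i j
                 simp only [Equiv.trans_apply]
                 rw [← not_lt, ← not_lt]
                 constructor
                 · intro hh
                   intro hc
                   exact hh ((h (τ.symm j) (τ.symm i)).mpr (by simpa using hc))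
                 · intro hh hc
                   exact hh (by simpa using (h (τ.symm j) (τ.symm i)).mp hc) } : Fin n ≃o Fin n) =
      OrderIso.refl (Fin n) := Subsingleton.elim _ _
  have hx : ∀ x, σ (τ.symm x) = x := by
    intro x
    have := congrArg (fun f : Fin n ≃o Fin n => f x) he
    simpa using this
  apply Equiv.ext
  intro i
  have := hx (τ i)
  simpa using this

lemma lt_iff_of_lt_imp {n : ℕ} (σ τ : Equiv.Perm (Fin n))
    (h : ∀ i j : Fin n, i < j → (σ i < σ j ↔ τ i < τ j)) :
    ∀ i j : Fin n, σ i < σ j ↔ τ i < τ j := by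
  intro i j
  rcases lt_trichotomy i j with h' | h' | h'
  · exact h i j h'
  · subst h'; simp
  · have hne : i ≠ j := h'.ne'
    constructor
    · intro hs
      by_contra hns
      have h2 : τ j < τ i := by
        rcases lt_or_eq_of_le (not_lt.mp hns) with hh | hh
        · exact hh
        · exact absurd (τ.injective hh) hne.symm
      exact absurd hs (asymm ((h j i h').mpr h2))
    · intro hs
      by_contra hns
      have h2 : σ j < σ i := by
        rcases lt_or_eq_of_le (not_lt.mp hns) with hh | hh
        · exact hh
        · exact absurd (σ.injective hh) hne.symm
      exact absurd hs (asymm ((h j i h').mp h2))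

/-- All non-inversions of an avoider have the same second coordinate. -/
lemma second_coord_aux {n : ℕ} (σ : Equiv.Perm (Fin n))
    (h123 : PermAvoids σ p123) (h132 : PermAvoids σ p132)
    (h3412 : PermAvoids σ (![2, 3, 0, 1] : Fin 4 → Fin 4))
    {i j k l : Fin n} (hij : i < j) (hσij : σ i < σ j)
    (hkl : k < l) (hσkl : σ k < σ l) (hjl : j < l) : False := by
  have hil : i < l := hij.trans hjl
  -- σ l < σ i
  have h1 : σ l < σ i := by
    by_contra hc
    have h2 : σ i < σ l := by
      rcases lt_or_eq_of_le (not_lt.mp hc) with hh | hh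
      · exact hh
      · exact absurd (σ.injective hh) hil.ne
    rcases lt_trichotomy (σ j) (σ l) with hh | hh | hh
    · exact h123 (contains123 σ hij hjl hσij hh)
    · exact absurd (σ.injective hh) hjl.ne
    · exact h132 (contains132 σ hij hjl h2 hh)
  have h2 : σ k < σ j := hσkl.trans (h1.trans hσij)
  rcases lt_trichotomy k j with hh | hh | hh
  · -- k < j < l; σ k < σ l < σ j : pattern 132
    exact h132 (contains132 σ hh hjl hσkl (h1.trans hσij))
  · subst hh; exact absurd h2 (lt_irrefl _)
  · -- i < j < k < l : pattern 3412
    exact h3412 (contains3412 σ hij hh hkl hσkl h1 hσij)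

lemma second_coord_eq {n : ℕ} (σ : Equiv.Perm (Fin n))
    (h123 : PermAvoids σ p123) (h132 : PermAvoids σ p132)
    (h3412 : PermAvoids σ (![2, 3, 0, 1] : Fin 4 → Fin 4))
    {i j k l : Fin n} (hij : i < j) (hσij : σ i < σ j)
    (hkl : k < l) (hσkl : σ k < σ l) : j = l := by
  rcases lt_trichotomy j l with h | h | h
  · exact absurd (second_coord_aux σ h123 h132 h3412 hij hσij hkl hσkl h) not_false
  · exact h
  · exact absurd (second_coord_aux σ h123 h132 h3412 hkl hσkl hij hσij h) not_false

/-- Every avoider is some `σ_{a,b}`. -/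
lemma avoider_eq_sig {n : ℕ} (hn : 0 < n) (σ : Equiv.Perm (Fin n))
    (h123 : PermAvoids σ p123) (h132 : PermAvoids σ p132)
    (h3412 : PermAvoids σ (![2, 3, 0, 1] : Fin 4 → Fin 4)) :
    (∃ a b : ℕ, ∃ (hab : a < b) (hb : b < n), σ = sig a b hab.le hb) ∨
      σ = sig 0 0 le_rfl hn := by
  by_cases hex : ∃ i j : Fin n, i < j ∧ σ i < σ j
  · left
    obtain ⟨i₀, j₀, hij₀, hσ₀⟩ := hex
    set b : Fin n := j₀ with hbdef
    -- the set of starting points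
    have hAne : (Finset.univ.filter (fun i : Fin n => i < b ∧ σ i < σ b)).Nonempty :=
      ⟨i₀, by simp [hij₀, hσ₀]⟩
    set A := Finset.univ.filter (fun i : Fin n => i < b ∧ σ i < σ b) with hAdef
    set a : Fin n := A.min' hAne with hadef
    have haA : a ∈ A := A.min'_mem hAne
    have hab : a < b := by
      have := Finset.mem_filter.mp haA
      exact this.2.1
    have hσab : σ a < σ b := (Finset.mem_filter.mp haA).2.2
    have hmin : ∀ i : Fin n, i < b → σ i < σ b → a ≤ i := by
      intro i h1 h2
      exact A.min'_le i (by simp [hAdef, h1, h2])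
    have claimB : ∀ i : Fin n, a ≤ i → i < b → σ i < σ b := by
      intro i hai hib
      by_contra hc
      have h2 : σ b < σ i := by
        rcases lt_or_eq_of_le (not_lt.mp hc) with hh | hh
        · exact hh
        · exact absurd (σ.injective hh) hib.ne'
      have hai' : a < i := by
        rcases lt_or_eq_of_le hai with hh | hh
        · exact hh
        · exact absurd (hh ▸ hσab) (asymm h2)
      have : i = b := second_coord_eq σ h123 h132 h3412 hai' (hσab.trans h2) hab hσab
      exact absurd this hib.ne
    -- characterization of non-inversions of σ
    have hchar : ∀ i j : Fin n, i < j → (σ i < σ j ↔ ((j : ℕ) = (b : ℕ) ∧ (a : ℕ) ≤ (i : ℕ))) := by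
      intro i j hij
      constructor
      · intro hs
        have hjb : j = b := second_coord_eq σ h123 h132 h3412 hij hs hab hσab
        subst hjb
        exact ⟨rfl, hmin i hij hs⟩
      · rintro ⟨h1, h2⟩
        have hjb : j = b := Fin.ext h1
        subst hjb
        exact claimB i h2 hij
    refine ⟨(a : ℕ), (b : ℕ), hab, b.isLt, ?_⟩
    apply perm_eq_of_lt_iff
    apply lt_iff_of_lt_imp
    intro i j hij
    rw [hchar i j hij, sig_lt_iff _ b.isLt hij]
  · right
    push_neg at hex
    apply perm_eq_of_lt_iff
    apply lt_iff_of_lt_imp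
    intro i j hij
    rw [sig_lt_iff le_rfl hn hij]
    constructor
    · intro hs; exact absurd hs (not_lt.mpr (hex i j hij))
    · rintro ⟨h1, _⟩
      have : (i : ℕ) < (j : ℕ) := hij
      omega

/-- Every `σ_{a,b}` is an avoider. -/
lemma sig_avoids {n : ℕ} {a b : ℕ} (hab : a ≤ b) (hb : b < n) :
    PermAvoids (sig a b hab hb) p123 ∧ PermAvoids (sig a b hab hb) p132 ∧
      PermAvoids (sig a b hab hb) (![2, 3, 0, 1] : Fin 4 → Fin 4) := by
  set σ := sig a b hab hb with hσ
  have key : ∀ i j : Fin n, i < j → σ i < σ j → (j : ℕ) = b := by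
    intro i j hij hs
    exact ((sig_lt_iff hab hb hij).mp hs).1
  refine ⟨?_, ?_, ?_⟩
  · rintro ⟨f, hf, h⟩
    have h01 : f 0 < f 1 := hf (by decide)
    have h12 : f 1 < f 2 := hf (by decide)
    have v01 : σ (f 0) < σ (f 1) := (h 0 1).mp (by decide)
    have v12 : σ (f 1) < σ (f 2) := (h 1 2).mp (by decide)
    have e1 := key _ _ h01 v01
    have e2 := key _ _ h12 v12
    have : ((f 1 : Fin n) : ℕ) < ((f 2 : Fin n) : ℕ) := h12
    omega
  · rintro ⟨f, hf, h⟩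
    have h01 : f 0 < f 1 := hf (by decide)
    have h12 : f 1 < f 2 := hf (by decide)
    have v02 : σ (f 0) < σ (f 2) := (h 0 2).mp (by decide)
    have v21 : σ (f 2) < σ (f 1) := (h 2 1).mp (by decide)
    have e1 := key _ _ h01 (v02.trans v21)
    have e2 := key _ _ (h01.trans h12) v02
    have : ((f 1 : Fin n) : ℕ) < ((f 2 : Fin n) : ℕ) := h12
    omega
  · rintro ⟨f, hf, h⟩
    have h01 : f 0 < f 1 := hf (by decide)
    have h23 : f 2 < f 3 := hf (by decide)
    have h13 : f 1 < f 3 := hf (by decide)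
    have v01 : σ (f 0) < σ (f 1) := (h 0 1).mp (by decide)
    have v23 : σ (f 2) < σ (f 3) := (h 2 3).mp (by decide)
    have e1 := key _ _ h01 v01
    have e2 := key _ _ h23 v23
    have : ((f 1 : Fin n) : ℕ) < ((f 3 : Fin n) : ℕ) := h13
    omega

lemma sig_diag_eq {n : ℕ} (a : ℕ) (ha : a < n) (hn : 0 < n) :
    sig a a le_rfl ha = sig 0 0 le_rfl hn := by
  apply Equiv.ext
  intro i
  apply Fin.ext
  rw [sig_apply, sig_apply]
  unfold F
  split_ifs <;> omega

lemma sig_self_lt {n : ℕ} {a b : ℕ} (hab : a < b) (hb : b < n) :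
    sig a b hab.le hb ⟨a, hab.trans hb⟩ < sig a b hab.le hb ⟨b, hb⟩ :=
  (sig_lt_iff hab.le hb (Fin.mk_lt_mk.mpr hab)).mpr ⟨rfl, le_rfl⟩

/-- the index type -/
def Idx (n : ℕ) := Option {p : Fin n × Fin n // p.1 < p.2}

noncomputable instance (n : ℕ) : Fintype (Idx n) := by
  unfold Idx; infer_instance

def idxEquiv (n : ℕ) : {p : Fin n × Fin n // p.1 < p.2} ≃ (Σ j : Fin n, Fin (j : ℕ)) where
  toFun p := ⟨p.1.2, ⟨(p.1.1 : ℕ), p.2⟩⟩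
  invFun q := ⟨(⟨(q.2 : ℕ), q.2.isLt.trans q.1.isLt⟩, q.1), q.2.isLt⟩
  left_inv p := by
    apply Subtype.ext
    apply Prod.ext <;> simp
  right_inv q := by
    rcases q with ⟨j, k⟩
    simp

lemma card_idx (n : ℕ) : Nat.card (Idx n) = n.choose 2 + 1 := by
  have h1 : Nat.card {p : Fin n × Fin n // p.1 < p.2} = n.choose 2 := by
    rw [Nat.card_congr (idxEquiv n), Nat.card_eq_fintype_card, Fintype.card_sigma]
    simp only [Fintype.card_fin]
    rw [show (∑ x : Fin n, (x : ℕ)) = ∑ i ∈ Finset.range n, i from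
      Fin.sum_univ_eq_sum_range (fun i => i) n, Finset.sum_range_id, Nat.choose_two_right]
  unfold Idx
  rw [Finite.card_option, h1]

end Stmt3Aux

open Stmt3Aux

theorem stmt3 :
    ∀ n, 1 ≤ n → Nat.card {σ : Equiv.Perm (Fin n) //
      PermAvoids σ p123 ∧ PermAvoids σ p132 ∧ PermAvoids σ (![2, 3, 0, 1] : Fin 4 → Fin 4)}
      = Nat.choose n 2 + 1 := by
  intro n hn
  have hn' : 0 < n := hn
  rw [← card_idx n]
  apply Nat.card_congr
  apply Equiv.symm
  apply Equiv.ofBijective (f := fun q : Idx n =>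
    (⟨match q with
      | none => sig 0 0 le_rfl hn'
      | some p => sig (p.1.1 : ℕ) (p.1.2 : ℕ) (le_of_lt p.2) p.1.2.isLt,
      by
        rcases q with _ | p
        · exact sig_avoids le_rfl hn'
        · exact sig_avoids (le_of_lt p.2) p.1.2.isLt⟩ :
      {σ : Equiv.Perm (Fin n) //
        PermAvoids σ p123 ∧ PermAvoids σ p132 ∧
          PermAvoids σ (![2, 3, 0, 1] : Fin 4 → Fin 4)}))
  constructor
  · -- injectivity
    rintro (_ | p) (_ | q) h
    · rfl
    · exfalso
      have heq : sig 0 0 le_rfl hn' =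
          sig ((q.1.1 : Fin n) : ℕ) ((q.1.2 : Fin n) : ℕ) (le_of_lt q.2) q.1.2.isLt :=
        congrArg Subtype.val h
      have hlt := sig_self_lt (a := ((q.1.1 : Fin n) : ℕ)) (b := ((q.1.2 : Fin n) : ℕ))
        q.2 q.1.2.isLt
      rw [← heq] at hlt
      have h2 := (sig_lt_iff (n := n) le_rfl hn' (Fin.mk_lt_mk.mpr q.2)).mp hlt
      have h3 : ((q.1.1 : Fin n) : ℕ) < ((q.1.2 : Fin n) : ℕ) := q.2
      simp only [Fin.val_mk] at h2
      omega
    · exfalso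
      have heq : sig 0 0 le_rfl hn' =
          sig ((p.1.1 : Fin n) : ℕ) ((p.1.2 : Fin n) : ℕ) (le_of_lt p.2) p.1.2.isLt :=
        (congrArg Subtype.val h).symm
      have hlt := sig_self_lt (a := ((p.1.1 : Fin n) : ℕ)) (b := ((p.1.2 : Fin n) : ℕ))
        p.2 p.1.2.isLt
      rw [← heq] at hlt
      have h2 := (sig_lt_iff (n := n) le_rfl hn' (Fin.mk_lt_mk.mpr p.2)).mp hlt
      have h3 : ((p.1.1 : Fin n) : ℕ) < ((p.1.2 : Fin n) : ℕ) := p.2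
      simp only [Fin.val_mk] at h2
      omega
    · have heq : sig ((p.1.1 : Fin n) : ℕ) ((p.1.2 : Fin n) : ℕ) (le_of_lt p.2) p.1.2.isLt =
          sig ((q.1.1 : Fin n) : ℕ) ((q.1.2 : Fin n) : ℕ) (le_of_lt q.2) q.1.2.isLt :=
        congrArg Subtype.val h
      have hlt1 := sig_self_lt p.2 p.1.2.isLt
      rw [heq] at hlt1
      have h1 := (sig_lt_iff (le_of_lt q.2) q.1.2.isLt (Fin.mk_lt_mk.mpr p.2)).mp hlt1
      have hlt2 := sig_self_lt q.2 q.1.2.isLt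
      rw [← heq] at hlt2
      have h2 := (sig_lt_iff (le_of_lt p.2) p.1.2.isLt (Fin.mk_lt_mk.mpr q.2)).mp hlt2
      simp only [Fin.val_mk] at h1 h2
      congr 1
      apply Subtype.ext
      apply Prod.ext
      · exact Fin.ext (by omega)
      · exact Fin.ext (by omega)
  · -- surjectivity
    rintro ⟨σ, h1, h2, h3⟩
    rcases avoider_eq_sig hn' σ h1 h2 h3 with ⟨a, b, hab, hb, heq⟩ | heq
    · refine ⟨some ⟨(⟨a, hab.trans hb⟩, ⟨b, hb⟩), Fin.mk_lt_mk.mpr hab⟩, ?_⟩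
      exact Subtype.ext heq.symm
    · exact ⟨none, Subtype.ext heq.symm⟩
end

section
/- The number of permutations in S_n avoiding all three patterns 123, 132, and 4231 equals C(n,2) + 1 for all n ≥ 1. -/
set_option linter.unreachableTactic false
set_option linter.unusedTactic false
set_option linter.unnecessarySeqFocus false




lemma perm_eq_of_pattern {n : ℕ} (σ τ : Equiv.Perm (Fin n))
    (h : ∀ t s : Fin n, t < s → (σ t < σ s ↔ τ t < τ s)) : σ = τ := by
  have h' : ∀ t s : Fin n, σ t < σ s ↔ τ t < τ s := by
    intro t s
    rcases lt_trichotomy t s with hlt | rfl | hgt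
    · exact h t s hlt
    · simp
    · have := h s t hgt
      constructor
      · intro hh
        rcases lt_trichotomy (τ t) (τ s) with h1 | h1 | h1
        · exact h1
        · exact absurd (τ.injective h1) (by rintro rfl; exact lt_irrefl _ hh)
        · exact absurd (this.mpr h1) (lt_asymm hh)
      · intro hh
        rcases lt_trichotomy (σ t) (σ s) with h1 | h1 | h1
        · exact h1
        · exact absurd (σ.injective h1) (by rintro rfl; exact lt_irrefl _ hh)
        · exact absurd (this.mp h1) (lt_asymm hh)
  set k : Equiv.Perm (Fin n) := σ.symm.trans τ with hk
  have hmono : StrictMono k := by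
    intro a b hab
    have : σ (σ.symm a) < σ (σ.symm b) := by simpa using hab
    simpa [hk] using (h' _ _).mp this
  have hid : ∀ m : ℕ, ∀ x : Fin n, x.val = m → k x = x := by
    intro m
    induction m using Nat.strong_induction_on with
    | _ m ih =>
      intro x hx
      obtain ⟨z, hz⟩ := k.surjective x
      rcases lt_trichotomy z x with hzx | rfl | hzx
      · have hzz : k z = z := ih z.val (by omega) z rfl
        exact absurd (hzz.symm.trans hz) (ne_of_lt hzx)
      · exact hz
      · have hlt : k x < x := by
          have := hmono hzx
          rw [hz] at this; exact this
        have hkx : k (k x) = k x := ih (k x).val (by omega) (k x) rfl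
        have := k.injective hkx
        rw [this] at hkx
        exact hkx
  have : ∀ x, σ.symm.trans τ x = x := fun x => hid x.val x rfl
  ext x
  have := this (σ x)
  simp at this
  rw [this]


lemma contains123 {n : ℕ} (σ : Equiv.Perm (Fin n)) {a b c : Fin n}
    (hab : a < b) (hbc : b < c) (h1 : σ a < σ b) (h2 : σ b < σ c) :
    PermContains σ p123 := by
  refine ⟨![a, b, c], ?_, ?_⟩
  · intro x y hxy
    fin_cases x <;> fin_cases y <;>
      simp_all <;> first | exact hab | exact hbc | exact lt_trans hab hbc |
        exact absurd hxy (by omega)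
  · intro i j
    have h3 := lt_trans h1 h2
    fin_cases i <;> fin_cases j <;>
      simp_all [p123] <;> first | omega | exact lt_asymm h1 | exact lt_asymm h2 |
        exact lt_asymm h3

lemma contains132 {n : ℕ} (σ : Equiv.Perm (Fin n)) {a b c : Fin n}
    (hab : a < b) (hbc : b < c) (h1 : σ a < σ c) (h2 : σ c < σ b) :
    PermContains σ p132 := by
  refine ⟨![a, b, c], ?_, ?_⟩
  · intro x y hxy
    fin_cases x <;> fin_cases y <;>
      simp_all <;> first | exact hab | exact hbc | exact lt_trans hab hbc |
        exact absurd hxy (by omega)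
  · intro i j
    have h3 := lt_trans h1 h2
    fin_cases i <;> fin_cases j <;>
      simp_all [p132] <;> first | omega | exact lt_asymm h1 | exact lt_asymm h2 |
        exact lt_asymm h3

lemma contains4231 {n : ℕ} (σ : Equiv.Perm (Fin n)) {a b c d : Fin n}
    (hab : a < b) (hbc : b < c) (hcd : c < d)
    (h1 : σ d < σ b) (h2 : σ b < σ c) (h3 : σ c < σ a) :
    PermContains σ (![3, 1, 2, 0] : Fin 4 → Fin 4) := by
  refine ⟨![a, b, c, d], ?_, ?_⟩
  · intro x y hxy
    fin_cases x <;> fin_cases y <;> simp_all <;>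
      first | exact hab | exact hbc | exact hcd | exact lt_trans hab hbc |
        exact lt_trans hbc hcd | exact lt_trans hab (lt_trans hbc hcd) |
        exact absurd hxy (by omega)
  · intro i j
    have h4 := lt_trans h1 h2
    have h5 := lt_trans h2 h3
    have h6 := lt_trans h4 h3
    fin_cases i <;> fin_cases j <;> simp_all <;>
      first | omega | exact lt_asymm h1 | exact lt_asymm h2 | exact lt_asymm h3 |
        exact lt_asymm h4 | exact lt_asymm h5 | exact lt_asymm h6 |
        (exact lt_trans h1 h2) | (exact lt_trans h2 h3)

lemma avoids_of_char {n : ℕ} (σ : Equiv.Perm (Fin n)) (i w : Fin n)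
    (hS : i < w ∨ (i = w ∧ (w : ℕ) = n - 1))
    (hchar : ∀ t s : Fin n, t < s → (σ t < σ s ↔ s = i ∨ ((s : ℕ) = n - 1 ∧ w ≤ t))) :
    PermAvoids σ p123 ∧ PermAvoids σ p132 ∧
      PermAvoids σ (![3, 1, 2, 0] : Fin 4 → Fin 4) := by
  refine ⟨?_, ?_, ?_⟩
  · rintro ⟨g, hg, hiff⟩
    have h01 : σ (g 0) < σ (g 1) := (hiff 0 1).mp (by decide)
    have h12 : σ (g 1) < σ (g 2) := (hiff 1 2).mp (by decide)
    have hg01 : g 0 < g 1 := hg (by decide)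
    have hg12 : g 1 < g 2 := hg (by decide)
    rcases (hchar _ _ hg01).mp h01 with rfl | ⟨hv, hw⟩
    · rcases (hchar _ _ hg12).mp h12 with h | ⟨hv, hw⟩
      · exact absurd h (ne_of_gt hg12)
      · rcases hS with h | ⟨rfl, h⟩
        · exact absurd (lt_of_le_of_lt hw h) (lt_irrefl _)
        · have := (g 2).is_lt
          rw [Fin.lt_def] at hg12
          omega
    · have := (g 2).is_lt
      rw [Fin.lt_def] at hg12
      omega
  · rintro ⟨g, hg, hiff⟩
    have h01 : σ (g 0) < σ (g 1) := (hiff 0 1).mp (by decide)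
    have h02 : σ (g 0) < σ (g 2) := (hiff 0 2).mp (by decide)
    have hg01 : g 0 < g 1 := hg (by decide)
    have hg02 : g 0 < g 2 := hg (by decide)
    have hg12 : g 1 < g 2 := hg (by decide)
    rcases (hchar _ _ hg01).mp h01 with rfl | ⟨hv, hw⟩
    · rcases (hchar _ _ hg02).mp h02 with h | ⟨hv, hw⟩
      · exact absurd h (ne_of_gt hg12)
      · rcases hS with h | ⟨rfl, h⟩
        · exact absurd (lt_trans (lt_of_le_of_lt hw hg01) h) (lt_irrefl _)
        · exact absurd (lt_of_le_of_lt hw hg01) (lt_irrefl _)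
    · have := (g 2).is_lt
      rw [Fin.lt_def] at hg12
      omega
  · rintro ⟨g, hg, hiff⟩
    have h12 : σ (g 1) < σ (g 2) := (hiff 1 2).mp (by decide)
    have h20 : σ (g 2) < σ (g 0) := (hiff 2 0).mp (by decide)
    have hg12 : g 1 < g 2 := hg (by decide)
    have hg02 : g 0 < g 2 := hg (by decide)
    have hg23 : g 2 < g 3 := hg (by decide)
    rcases (hchar _ _ hg12).mp h12 with rfl | ⟨hv, hw⟩
    · exact absurd ((hchar _ _ hg02).mpr (Or.inl rfl)) (lt_asymm h20)
    · have := (g 3).is_lt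
      rw [Fin.lt_def] at hg23
      omega

lemma char_of_avoids {m : ℕ} (σ : Equiv.Perm (Fin (m + 1)))
    (h1 : PermAvoids σ p123) (h2 : PermAvoids σ p132)
    (h3 : PermAvoids σ (![3, 1, 2, 0] : Fin 4 → Fin 4)) :
    ∃ i w : Fin (m + 1), (i < w ∨ (i = w ∧ (w : ℕ) = m)) ∧
      ∀ t s : Fin (m + 1), t < s → (σ t < σ s ↔ s = i ∨ ((s : ℕ) = m ∧ w ≤ t)) := by
  classical
  set lst : Fin (m + 1) := Fin.last m with hlst
  set i : Fin (m + 1) := σ.symm lst with hi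
  have hσi : σ i = lst := σ.apply_symm_apply lst
  have hmax : ∀ t, t ≠ i → σ t < σ i := by
    intro t ht
    have hne : σ t ≠ σ i := fun h => ht (σ.injective h)
    rw [hσi] at hne ⊢
    exact lt_of_le_of_ne (Fin.le_last _) hne
  have hlt_of : ∀ {a b : Fin (m + 1)}, a ≠ b → ¬ σ b < σ a → σ a < σ b := by
    intro a b hne hnlt
    rcases lt_trichotomy (σ a) (σ b) with h | h | h
    · exact h
    · exact absurd (σ.injective h) hne
    · exact absurd h hnlt
  have hA : ∀ t s : Fin (m + 1), t < s → t < i → s ≠ i → σ s < σ t := by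
    intro t s hts hti hsi
    by_contra hn
    have hlt : σ t < σ s := hlt_of (ne_of_lt hts) hn
    rcases lt_trichotomy s i with h | h | h
    · exact h1 (contains123 σ hts h hlt (hmax s hsi))
    · exact hsi h
    · exact h2 (contains132 σ hti h hlt (hmax s hsi))
  have hB : ∀ t s : Fin (m + 1), i < t → t < s → (s : ℕ) < m → σ s < σ t := by
    intro t s hit hts hsm
    by_contra hn
    have hlt : σ t < σ s := hlt_of (ne_of_lt hts) hn
    have hsu : s < lst := by rw [hlst]; exact Fin.lt_last_iff_ne_last.mpr (by
      intro h; rw [h] at hsm; simp at hsm)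
    have htu : t ≠ lst := ne_of_lt (lt_trans hts hsu)
    have hui : lst ≠ i := by
      intro h
      rw [← h] at hit
      exact absurd (lt_trans (lt_trans hit hts) hsu) (lt_irrefl _)
    rcases lt_trichotomy (σ t) (σ lst) with h | h | h
    · rcases lt_trichotomy (σ s) (σ lst) with h' | h' | h'
      · exact h1 (contains123 σ hts hsu hlt h')
      · exact absurd (σ.injective h') (ne_of_lt hsu)
      · exact h2 (contains132 σ hts hsu h h')
    · exact absurd (σ.injective h) htu
    · have hsi : s ≠ i := ne_of_gt (lt_trans hit hts)
      exact h3 (contains4231 σ hit hts hsu h hlt (hmax s hsi))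
  by_cases hE : ∃ t : Fin (m + 1), i < t ∧ (t : ℕ) < m ∧ σ t < σ lst
  · set T : Finset (Fin (m + 1)) :=
      Finset.univ.filter (fun t => i < t ∧ (t : ℕ) < m ∧ σ t < σ lst) with hT
    have hTne : T.Nonempty := by
      obtain ⟨t, ht⟩ := hE
      exact ⟨t, by simp [hT, ht]⟩
    set w := T.min' hTne with hw
    have hwT : i < w ∧ (w : ℕ) < m ∧ σ w < σ lst := by
      have h := T.min'_mem hTne
      exact (Finset.mem_filter.mp h).2
    refine ⟨i, w, Or.inl hwT.1, ?_⟩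
    intro t s hts
    constructor
    · intro hlt
      by_cases hsi : s = i
      · exact Or.inl hsi
      rcases lt_trichotomy t i with h | rfl | h
      · exact absurd (hA t s hts h hsi) (lt_asymm hlt)
      · exact absurd (hmax s hsi) (lt_asymm hlt)
      · rcases lt_or_ge (s : ℕ) m with h' | h'
        · exact absurd (hB t s h hts h') (lt_asymm hlt)
        · have hsm : (s : ℕ) = m := le_antisymm (Nat.lt_succ_iff.mp s.is_lt) h'
          have hseq : s = lst := Fin.ext (by simp [hlst, hsm])
          refine Or.inr ⟨hsm, ?_⟩
          apply T.min'_le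
          simp only [hT, Finset.mem_filter, Finset.mem_univ, true_and]
          refine ⟨h, ?_, ?_⟩
          · have := hts; rw [Fin.lt_def] at this; omega
          · rw [← hseq]; exact hlt
    · rintro (rfl | ⟨hsm, hwt⟩)
      · exact hmax t (ne_of_lt hts)
      · have hseq : s = lst := Fin.ext (by simp [hlst, hsm])
        rw [hseq]
        rcases eq_or_lt_of_le hwt with rfl | hwt'
        · exact hwT.2.2
        · have htm : (t : ℕ) < m := by
            have := hts; rw [Fin.lt_def] at this; omega
          exact lt_trans (hB w t hwT.1 hwt' htm) hwT.2.2
  · refine ⟨i, lst, ?_, ?_⟩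
    · rcases lt_or_eq_of_le (Fin.le_last i) with h | h
      · exact Or.inl h
      · exact Or.inr ⟨h, by simp [hlst]⟩
    intro t s hts
    constructor
    · intro hlt
      by_cases hsi : s = i
      · exact Or.inl hsi
      rcases lt_trichotomy t i with h | rfl | h
      · exact absurd (hA t s hts h hsi) (lt_asymm hlt)
      · exact absurd (hmax s hsi) (lt_asymm hlt)
      · rcases lt_or_ge (s : ℕ) m with h' | h'
        · exact absurd (hB t s h hts h') (lt_asymm hlt)
        · have hsm : (s : ℕ) = m := le_antisymm (Nat.lt_succ_iff.mp s.is_lt) h'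
          have hseq : s = lst := Fin.ext (by simp [hlst, hsm])
          exact absurd ⟨t, h, by rw [Fin.lt_def] at hts; omega, hseq ▸ hlt⟩ hE
    · rintro (rfl | ⟨hsm, hwt⟩)
      · exact hmax t (ne_of_lt hts)
      · have hseq : s = lst := Fin.ext (by simp [hlst, hsm])
        rw [hseq] at hts
        exact absurd (lt_of_le_of_lt hwt hts) (lt_irrefl _)
/-- value of our explicit family of permutations, in ℕ terms. -/
def fNat (n i w t : ℕ) : ℕ :=
  if t = i then n - 1
  else if t < i then n - 2 - t
  else if t < w then n - 1 - t
  else if t < n - 1 then n - 2 - t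
  else n - 1 - w

lemma fNat_lt {n i w t : ℕ} (hn : 0 < n) (ht : t < n) : fNat n i w t < n := by
  unfold fNat; split_ifs <;> omega

lemma fNat_ne {n i w t s : ℕ} (hw : w < n)
    (hiw : i < w ∨ (i = w ∧ i = n - 1)) (ht : t < n) (hs : s < n) (hts : t < s) :
    fNat n i w t ≠ fNat n i w s := by
  unfold fNat; split_ifs <;> omega

lemma fNat_ascent {n i w t s : ℕ} (hw : w < n)
    (hiw : i < w ∨ (i = w ∧ i = n - 1)) (ht : t < n) (hs : s < n) (hts : t < s) :
    (fNat n i w t < fNat n i w s ↔ (s = i ∨ (s = n - 1 ∧ w ≤ t))) := by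
  unfold fNat; split_ifs <;> omega

section FamilyConstruction

variable {m : ℕ}

lemma hiw_nat {i w : Fin (m + 1)} (hS : i < w ∨ (i = w ∧ (w : ℕ) = m)) :
    (i : ℕ) < (w : ℕ) ∨ ((i : ℕ) = (w : ℕ) ∧ (i : ℕ) = (m + 1) - 1) := by
  rcases hS with h | ⟨h, h2⟩
  · exact Or.inl h
  · exact Or.inr ⟨by rw [h], by rw [h]; omega⟩

noncomputable def fPerm (i w : Fin (m + 1)) (hS : i < w ∨ (i = w ∧ (w : ℕ) = m)) :
    Equiv.Perm (Fin (m + 1)) :=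
  Equiv.ofBijective
    (fun t => (⟨fNat (m + 1) i w t, fNat_lt (by omega) t.is_lt⟩ : Fin (m + 1)))
    (Finite.injective_iff_bijective.mp (by
      intro a b hab
      by_contra hne
      have hv : fNat (m + 1) i w a = fNat (m + 1) i w b := congrArg Fin.val hab
      rcases Nat.lt_trichotomy (a : ℕ) (b : ℕ) with h | h | h
      · exact fNat_ne w.is_lt (hiw_nat hS) a.is_lt b.is_lt h hv
      · exact hne (Fin.ext h)
      · exact fNat_ne w.is_lt (hiw_nat hS) b.is_lt a.is_lt h hv.symm))

lemma fPerm_char (i w : Fin (m + 1)) (hS : i < w ∨ (i = w ∧ (w : ℕ) = m)) :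
    ∀ t s : Fin (m + 1), t < s →
      (fPerm i w hS t < fPerm i w hS s ↔ s = i ∨ ((s : ℕ) = m ∧ w ≤ t)) := by
  intro t s hts
  have hts' : (t : ℕ) < (s : ℕ) := hts
  have := fNat_ascent (i := i) (w := w) w.is_lt (hiw_nat hS) t.is_lt s.is_lt hts'
  constructor
  · intro h
    have hval : fNat (m + 1) i w t < fNat (m + 1) i w s := h
    rcases this.mp hval with h' | ⟨h', h''⟩
    · exact Or.inl (Fin.ext h')
    · exact Or.inr ⟨by omega, h''⟩
  · intro h
    have : fNat (m + 1) i w t < fNat (m + 1) i w s := by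
      apply this.mpr
      rcases h with rfl | ⟨h', h''⟩
      · exact Or.inl rfl
      · exact Or.inr ⟨by omega, h''⟩
    exact this

lemma fNat_self {n i w : ℕ} : fNat n i w i = n - 1 := by
  unfold fNat; simp

lemma fNat_eq_top {n i w t : ℕ} (hw : w < n)
    (hiw : i < w ∨ (i = w ∧ i = n - 1)) (ht : t < n)
    (h : fNat n i w t = n - 1) : t = i := by
  unfold fNat at h; split_ifs at h <;> omega

lemma fNat_at_last {n i w : ℕ} (hn : 0 < n) (hw : w < n)
    (hiw : i < w ∨ (i = w ∧ i = n - 1)) (hne : i ≠ n - 1) :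
    fNat n i w (n - 1) = n - 1 - w := by
  unfold fNat; split_ifs <;> omega

lemma fNat_param_inj {n i w i' w' : ℕ} (hn : 0 < n) (hw : w < n) (hw' : w' < n)
    (hiw : i < w ∨ (i = w ∧ i = n - 1)) (hiw' : i' < w' ∨ (i' = w' ∧ i' = n - 1))
    (h : ∀ t, t < n → fNat n i w t = fNat n i' w' t) : i = i' ∧ w = w' := by
  have hii : i = i' := by
    have h1 := h i (by omega)
    rw [fNat_self] at h1
    exact fNat_eq_top hw' hiw' (by omega) h1.symm
  refine ⟨hii, ?_⟩
  subst hii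
  by_cases hlast : i = n - 1
  · omega
  · have h3 := h (n - 1) (by omega)
    rw [fNat_at_last hn hw hiw hlast, fNat_at_last hn hw' hiw' hlast] at h3
    omega

end FamilyConstruction

theorem stmt4 :
    ∀ n, 1 ≤ n → Nat.card {σ : Equiv.Perm (Fin n) //
      PermAvoids σ p123 ∧ PermAvoids σ p132 ∧ PermAvoids σ (![3, 1, 2, 0] : Fin 4 → Fin 4)}
      = Nat.choose n 2 + 1 := by
  intro n hn
  obtain ⟨m, rfl⟩ : ∃ m, n = m + 1 := ⟨n - 1, by omega⟩
  have mk : ∀ (i w : Fin (m + 1)) (hS : i < w ∨ (i = w ∧ (w : ℕ) = m)),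
      PermAvoids (fPerm i w hS) p123 ∧ PermAvoids (fPerm i w hS) p132 ∧
        PermAvoids (fPerm i w hS) (![3, 1, 2, 0] : Fin 4 → Fin 4) :=
    fun i w hS => avoids_of_char _ i w hS (fPerm_char i w hS)
  set A := {σ : Equiv.Perm (Fin (m + 1)) //
      PermAvoids σ p123 ∧ PermAvoids σ p132 ∧
        PermAvoids σ (![3, 1, 2, 0] : Fin 4 → Fin 4)} with hA
  have hSlast : (Fin.last m) < (Fin.last m) ∨
      (Fin.last m = Fin.last m ∧ ((Fin.last m : Fin (m+1)) : ℕ) = m) :=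
    Or.inr ⟨rfl, Fin.val_last m⟩
  have hSlt : ∀ (w : Fin (m + 1)) (j : Fin (w : ℕ)),
      (⟨(j : ℕ), lt_trans j.is_lt w.is_lt⟩ : Fin (m + 1)) < w ∨
      ((⟨(j : ℕ), lt_trans j.is_lt w.is_lt⟩ : Fin (m + 1)) = w ∧ (w : ℕ) = m) :=
    fun w j => Or.inl j.is_lt
  let Φ : ((Σ w : Fin (m + 1), Fin (w : ℕ)) ⊕ Unit) → A := fun d =>
    match d with
    | Sum.inl ⟨w, j⟩ => ⟨fPerm _ w (hSlt w j), mk _ w (hSlt w j)⟩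
    | Sum.inr _ => ⟨fPerm (Fin.last m) (Fin.last m) hSlast, mk _ _ hSlast⟩
  have key : ∀ (i w i' w' : Fin (m+1)) hS hS',
      fPerm i w hS = fPerm i' w' hS' → i = i' ∧ w = w' := by
    intro i w i' w' hS hS' heq
    have hvals : ∀ t, t < m + 1 → fNat (m+1) (i:ℕ) (w:ℕ) t = fNat (m+1) (i':ℕ) (w':ℕ) t := by
      intro t ht
      have := congrArg (fun (e : Equiv.Perm (Fin (m+1))) => ((e ⟨t, ht⟩ : Fin (m+1)) : ℕ)) heq
      exact this
    have := fNat_param_inj (by omega) w.is_lt w'.is_lt (hiw_nat hS) (hiw_nat hS') hvals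
    exact ⟨Fin.ext this.1, Fin.ext this.2⟩
  have hinj : Function.Injective Φ := by
    rintro (⟨w, j⟩ | u) (⟨w', j'⟩ | u') heq
    · obtain ⟨hii, hww⟩ := key _ _ _ _ (hSlt w j) (hSlt w' j') (Subtype.ext_iff.mp heq)
      have hw : w = w' := hww
      subst hw
      have : j = j' := by
        apply Fin.ext
        exact congrArg (fun x : Fin (m+1) => x.val) hii
      rw [this]
    · exfalso
      have h := key _ _ _ _ (hSlt w j) hSlast (Subtype.ext_iff.mp heq)
      have h1 := congrArg (fun x : Fin (m+1) => x.val) h.1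
      have h2 := congrArg (fun x : Fin (m+1) => x.val) h.2
      simp at h1 h2
      have := j.is_lt
      omega
    · exfalso
      have h := key _ _ _ _ hSlast (hSlt w' j') (Subtype.ext_iff.mp heq)
      have h1 := congrArg (fun x : Fin (m+1) => x.val) h.1
      have h2 := congrArg (fun x : Fin (m+1) => x.val) h.2
      simp at h1 h2
      have := j'.is_lt
      omega
    · rfl
  have hsurj : Function.Surjective Φ := by
    rintro ⟨σ, hav1, hav2, hav3⟩
    obtain ⟨i, w, hS, hchar⟩ := char_of_avoids σ hav1 hav2 hav3
    rcases hS with hlt | ⟨heqiw, hwm⟩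
    · have hltv : (i : ℕ) < (w : ℕ) := hlt
      refine ⟨Sum.inl ⟨w, ⟨(i : ℕ), hltv⟩⟩, ?_⟩
      apply Subtype.ext
      apply perm_eq_of_pattern
      intro t s hts
      rw [fPerm_char _ _ _ t s hts, hchar t s hts]
    · have hil : i = Fin.last m := Fin.ext (by rw [Fin.val_last]; rw [heqiw]; exact hwm)
      have hwl : w = Fin.last m := Fin.ext (by rw [Fin.val_last]; exact hwm)
      refine ⟨Sum.inr (), ?_⟩
      apply Subtype.ext
      apply perm_eq_of_pattern
      intro t s hts
      rw [fPerm_char _ _ _ t s hts, hchar t s hts, hil, hwl]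
  have hcard : Nat.card A = Nat.card ((Σ w : Fin (m + 1), Fin (w : ℕ)) ⊕ Unit) :=
    (Nat.card_eq_of_bijective Φ ⟨hinj, hsurj⟩).symm
  rw [hcard, Nat.card_eq_fintype_card, Fintype.card_sum, Fintype.card_sigma]
  simp only [Fintype.card_fin, Fintype.card_unit]
  have hsum : ∑ w : Fin (m + 1), (w : ℕ) = ∑ j ∈ Finset.range (m + 1), j :=
    Fin.sum_univ_eq_sum_range (fun j => j) (m + 1)
  have hgauss : (∑ j ∈ Finset.range (m + 1), j) * 2 = (m + 1) * m := by
    simpa using Finset.sum_range_id_mul_two (m + 1)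
  have hchoose : (m + 1).choose 2 = (m + 1) * m / 2 := by
    rw [Nat.choose_two_right]; simp
  rw [hsum, hchoose]
  omega
end

section
/- The number of permutations in S_n avoiding the patterns 123, 231, and 4312 equals 2n − 2 for all n ≥ 4. -/
section Aux

variable {n : ℕ}

/-- The permutation `k, k-1, …, 0, n-1, n-2, …, k+1`. -/
def cPerm (n k : ℕ) (h : k < n) : Equiv.Perm (Fin n) where
  toFun i := ⟨if (i : ℕ) ≤ k then k - i else n + k - i, by have := i.isLt; split <;> omega⟩
  invFun i := ⟨if (i : ℕ) ≤ k then k - i else n + k - i, by have := i.isLt; split <;> omega⟩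
  left_inv i := by have := i.isLt; ext; simp only; split_ifs <;> omega
  right_inv i := by have := i.isLt; ext; simp only; split_ifs <;> omega

/-- The permutation `n-1, k, k-1, …, 0, n-2, …, k+1`. -/
def dPerm (n k : ℕ) (h : k + 3 ≤ n) : Equiv.Perm (Fin n) where
  toFun i := ⟨if (i : ℕ) = 0 then n - 1 else if (i : ℕ) ≤ k + 1 then k + 1 - i
      else n + k - i, by have := i.isLt; split_ifs <;> omega⟩
  invFun i := ⟨if (i : ℕ) = n - 1 then 0 else if (i : ℕ) ≤ k then k + 1 - i
      else n + k - i, by have := i.isLt; split_ifs <;> omega⟩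
  left_inv i := by have := i.isLt; ext; simp only; split_ifs <;> omega
  right_inv i := by have := i.isLt; ext; simp only; split_ifs <;> omega

lemma cPerm_apply_val {k : ℕ} (h : k < n) (i : Fin n) :
    ((cPerm n k h i : Fin n) : ℕ) = if (i : ℕ) ≤ k then k - i else n + k - i := rfl

lemma dPerm_apply_val {k : ℕ} (h : k + 3 ≤ n) (i : Fin n) :
    ((dPerm n k h i : Fin n) : ℕ) =
      if (i : ℕ) = 0 then n - 1 else if (i : ℕ) ≤ k + 1 then k + 1 - i else n + k - i := rfl

lemma cPerm_lt_iff {k : ℕ} (h : k < n) {i j : Fin n} (hij : i < j) :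
    cPerm n k h i < cPerm n k h j ↔ ((i : ℕ) ≤ k ∧ k < (j : ℕ)) := by
  have hi := i.isLt; have hj := j.isLt
  rw [Fin.lt_def] at hij ⊢
  rw [cPerm_apply_val, cPerm_apply_val]
  split_ifs <;> omega

lemma dPerm_lt_iff {k : ℕ} (h : k + 3 ≤ n) {i j : Fin n} (hij : i < j) :
    dPerm n k h i < dPerm n k h j ↔
      (1 ≤ (i : ℕ) ∧ (i : ℕ) ≤ k + 1 ∧ k + 1 < (j : ℕ)) := by
  have hi := i.isLt; have hj := j.isLt
  rw [Fin.lt_def] at hij ⊢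
  rw [dPerm_apply_val, dPerm_apply_val]
  split_ifs <;> omega

/-- Generic avoidance lemma: if the ascents of `σ` are exactly the pairs with
`lo ≤ i < mid ≤ j` where `lo ≤ 1`, then `σ` avoids `123`, `231` and `4312`. -/
lemma avoids_of_char_s8 (σ : Equiv.Perm (Fin n)) (lo mid : ℕ) (hlo : lo ≤ 1)
    (hchar : ∀ i j : Fin n, i < j →
      (σ i < σ j ↔ (lo ≤ (i : ℕ) ∧ (i : ℕ) < mid ∧ mid ≤ (j : ℕ)))) :
    PermAvoids σ p123 ∧ PermAvoids σ p231 ∧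
      PermAvoids σ (![3, 2, 0, 1] : Fin 4 → Fin 4) := by
  refine ⟨?_, ?_, ?_⟩
  · rintro ⟨f, hf, hrel⟩
    have h01 := (hrel 0 1).mp (by decide)
    have h12 := (hrel 1 2).mp (by decide)
    have a := (hchar _ _ (hf (show (0:Fin 3) < 1 by decide))).mp h01
    have b := (hchar _ _ (hf (show (1:Fin 3) < 2 by decide))).mp h12
    omega
  · rintro ⟨f, hf, hrel⟩
    have h01 := (hrel 0 1).mp (by decide)
    have h20 := (hrel 2 0).mp (by decide)
    have hf01 := hf (show (0:Fin 3) < 1 by decide)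
    have hf12 := hf (show (1:Fin 3) < 2 by decide)
    have a := (hchar _ _ hf01).mp h01
    have hf12' : ((f 1 : ℕ)) < (f 2 : ℕ) := hf12
    have : σ (f 0) < σ (f 2) :=
      (hchar _ _ (hf01.trans hf12)).mpr ⟨a.1, a.2.1, by omega⟩
    exact absurd h20 this.asymm
  · rintro ⟨f, hf, hrel⟩
    have h23 := (hrel 2 3).mp (by decide)
    have h31 := (hrel 3 1).mp (by decide)
    have hf01 := hf (show (0:Fin 4) < 1 by decide)
    have hf12 := hf (show (1:Fin 4) < 2 by decide)
    have hf23 := hf (show (2:Fin 4) < 3 by decide)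
    have a := (hchar _ _ hf23).mp h23
    have hf01' : ((f 0 : ℕ)) < (f 1 : ℕ) := hf01
    have hf12' : ((f 1 : ℕ)) < (f 2 : ℕ) := hf12
    have : σ (f 1) < σ (f 3) :=
      (hchar _ _ (hf12.trans hf23)).mpr ⟨by omega, by omega, a.2.2⟩
    exact absurd h31 this.asymm

lemma strictMono_vec3 {a b c : Fin n} (hab : a < b) (hbc : b < c) :
    StrictMono (![a, b, c]) := by
  intro x y hxy
  fin_cases x <;> fin_cases y <;>
    simp_all <;> first | exact hab | exact hbc | exact hab.trans hbc

lemma strictMono_vec4 {a b c d : Fin n} (hab : a < b) (hbc : b < c) (hcd : c < d) :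
    StrictMono (![a, b, c, d]) := by
  intro x y hxy
  fin_cases x <;> fin_cases y <;> simp_all <;>
    first | exact hab | exact hbc | exact hcd | exact hab.trans hbc |
      exact hbc.trans hcd | exact (hab.trans hbc).trans hcd

lemma contains_p123 {σ : Equiv.Perm (Fin n)} {a b c : Fin n} (hab : a < b) (hbc : b < c)
    (h1 : σ a < σ b) (h2 : σ b < σ c) : PermContains σ p123 := by
  refine ⟨![a, b, c], strictMono_vec3 hab hbc, ?_⟩
  have h3 := h1.trans h2
  intro i j
  fin_cases i <;> fin_cases j <;>
    simp [p123, h1, h2, h3, h1.asymm, h2.asymm, h3.asymm, lt_irrefl] <;> decide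

lemma contains_p231 {σ : Equiv.Perm (Fin n)} {a b c : Fin n} (hab : a < b) (hbc : b < c)
    (h1 : σ c < σ a) (h2 : σ a < σ b) : PermContains σ p231 := by
  refine ⟨![a, b, c], strictMono_vec3 hab hbc, ?_⟩
  have h3 := h1.trans h2
  intro i j
  fin_cases i <;> fin_cases j <;>
    simp [p231, h1, h2, h3, h1.asymm, h2.asymm, h3.asymm, lt_irrefl] <;> decide

lemma contains_p4312 {σ : Equiv.Perm (Fin n)} {a b c d : Fin n}
    (hab : a < b) (hbc : b < c) (hcd : c < d)
    (h1 : σ b < σ a) (h2 : σ c < σ d) (h3 : σ d < σ b) :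
    PermContains σ (![3, 2, 0, 1] : Fin 4 → Fin 4) := by
  refine ⟨![a, b, c, d], strictMono_vec4 hab hbc hcd, ?_⟩
  have h4 := h3.trans h1
  have h5 := h2.trans h3
  have h6 := h5.trans h1
  intro i j
  fin_cases i <;> fin_cases j <;>
    simp [h1, h2, h3, h4, h5, h6, h1.asymm, h2.asymm, h3.asymm, h4.asymm, h5.asymm,
      h6.asymm, lt_irrefl] <;> decide

/-- A permutation of `Fin n` is determined by its set of ascents. -/
lemma perm_eq_of_lt_iff {σ τ : Equiv.Perm (Fin n)}
    (h : ∀ i j : Fin n, i < j → (σ i < σ j ↔ τ i < τ j)) : σ = τ := by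
  have h' : ∀ i j : Fin n, σ i < σ j → τ i < τ j := by
    intro i j hs
    rcases lt_trichotomy i j with hij | rfl | hji
    · exact (h i j hij).mp hs
    · exact absurd hs (lt_irrefl _)
    · have h2 : ¬ τ j < τ i := fun ht => hs.asymm ((h j i hji).mpr ht)
      have hne : τ i ≠ τ j := fun e => hji.ne (τ.injective e).symm
      exact lt_of_le_of_ne (not_lt.mp h2) hne
  have key : StrictMono fun a => τ (σ.symm a) := by
    intro a b hab
    exact h' _ _ (by simpa using hab)
  have hr : Set.range (fun a => τ (σ.symm a)) = Set.range (id : Fin n → Fin n) := by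
    rw [Set.range_id]
    exact Set.range_eq_univ.mpr fun y => ⟨σ (τ.symm y), by simp⟩
  have hid := (StrictMono.range_inj key strictMono_id).mp hr
  refine Equiv.ext fun x => ?_
  have := congrFun hid (σ x)
  simpa using this.symm

/-- Classification of the permutations avoiding `123`, `231`, `4312`. -/
lemma classify (hn : 2 ≤ n) (σ : Equiv.Perm (Fin n))
    (h1 : PermAvoids σ p123) (h2 : PermAvoids σ p231)
    (h3 : PermAvoids σ (![3, 2, 0, 1] : Fin 4 → Fin 4)) :
    (∃ k, ∃ h : k < n, σ = cPerm n k h) ∨ (∃ k, ∃ h : k + 3 ≤ n, σ = dPerm n k h) := by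
  set top : Fin n := ⟨n - 1, by omega⟩ with htop
  set m : Fin n := σ.symm top with hmdef
  have hm : σ m = top := σ.apply_symm_apply top
  have hmax : ∀ i : Fin n, i ≠ m → σ i < top := by
    intro i hi
    have hne : σ i ≠ top := fun e => hi (by rw [hmdef, ← e, Equiv.symm_apply_apply])
    have hlt := (σ i).isLt
    have : (σ i : ℕ) ≠ n - 1 := fun e => hne (Fin.ext e)
    rw [Fin.lt_def]; simp only [htop]; omega
  by_cases hm0 : (m : ℕ) = 0
  · -- σ 0 is the maximum
    set top2 : Fin n := ⟨n - 2, by omega⟩ with htop2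
    set m' : Fin n := σ.symm top2 with hm'def
    have hm' : σ m' = top2 := σ.apply_symm_apply top2
    have hm'm : m' ≠ m := by
      intro e
      have : top2 = top := by rw [hm'def, hmdef] at e; exact σ.symm.injective e
      have := congrArg Fin.val this
      simp only [htop, htop2] at this; omega
    have hm'1 : 1 ≤ (m' : ℕ) := by
      rcases Nat.eq_zero_or_pos (m' : ℕ) with h | h
      · exact absurd (Fin.ext (h.trans hm0.symm) : m' = m) hm'm
      · exact h
    have hmax2 : ∀ i : Fin n, i ≠ m → i ≠ m' → σ i < top2 := by
      intro i hi hi'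
      have hne : (σ i : ℕ) ≠ n - 1 := fun e =>
        hi (by rw [hmdef, ← show σ i = top from Fin.ext e, Equiv.symm_apply_apply])
      have hne2 : (σ i : ℕ) ≠ n - 2 := fun e =>
        hi' (by rw [hm'def, ← show σ i = top2 from Fin.ext e, Equiv.symm_apply_apply])
      have hlt := (σ i).isLt
      rw [Fin.lt_def]; simp only [htop2]; omega
    by_cases hm'one : (m' : ℕ) = 1
    · -- σ is the descending permutation
      left
      refine ⟨n - 1, by omega, perm_eq_of_lt_iff ?_⟩
      intro i j hij
      rw [cPerm_lt_iff (by omega) hij]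
      have hj := j.isLt
      constructor
      · intro hs
        exfalso
        by_cases hi0 : i = m
        · have hjm : j ≠ m := fun e => hij.ne (hi0.trans e.symm)
          have hts : top < σ j := by rw [← hm, ← hi0]; exact hs
          exact (hmax j hjm).asymm hts
        · by_cases hi1 : i = m'
          · have hjm : j ≠ m := by
              intro e
              have := congrArg Fin.val e
              have hiv : (i : ℕ) < (j : ℕ) := hij
              omega
            have hjm' : j ≠ m' := fun e => hij.ne (hi1.trans e.symm)
            have hts : top2 < σ j := by rw [← hm', ← hi1]; exact hs
            exact (hmax2 j hjm hjm').asymm hts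
          · -- i ≥ 2 : use the 4312 pattern at positions m < m' < i < j
            have hiv : 2 ≤ (i : ℕ) := by
              have h0 : (i : ℕ) ≠ 0 := fun e => hi0 (Fin.ext (e.trans hm0.symm))
              have h1 : (i : ℕ) ≠ 1 := fun e => hi1 (Fin.ext (e.trans hm'one.symm))
              omega
            have hjm : j ≠ m := by
              intro e; have := congrArg Fin.val e
              have hiv2 : (i : ℕ) < (j : ℕ) := hij
              omega
            have hjm' : j ≠ m' := by
              intro e; have := congrArg Fin.val e
              have hiv2 : (i : ℕ) < (j : ℕ) := hij
              omega
            refine h3 (contains_p4312 (a := m) (b := m') (c := i) (d := j) ?_ ?_ hij ?_ hs ?_)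
            · rw [Fin.lt_def]; omega
            · rw [Fin.lt_def]; omega
            · rw [hm, hm', Fin.lt_def]; simp only [htop, htop2]; omega
            · rw [hm']
              exact hmax2 j hjm hjm'
      · intro hcon; omega
    · -- σ = dPerm (m' - 2)
      right
      have hm'2 : 2 ≤ (m' : ℕ) := by omega
      have hm'lt := m'.isLt
      refine ⟨(m' : ℕ) - 2, by omega, perm_eq_of_lt_iff ?_⟩
      have one : Fin n := ⟨1, by omega⟩
      have cross2 : ∀ a b : Fin n, 1 ≤ (a : ℕ) → a < m' → m' < b → σ a < σ b := by
        intro a b ha ham hmb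
        have ham' : a ≠ m' := ham.ne
        have hamm : a ≠ m := fun e => by
          have := congrArg Fin.val e; omega
        have hb : σ b ≠ σ a := fun e => (ham.trans hmb).ne (σ.injective e).symm
        by_contra hc
        have hba : σ b < σ a := lt_of_le_of_ne (not_lt.mp hc) hb
        exact h2 (contains_p231 ham hmb hba (by rw [hm']; exact hmax2 a hamm ham'))
      intro i j hij
      rw [dPerm_lt_iff (by omega) hij]
      have hiv : (i : ℕ) < (j : ℕ) := hij
      have hjlt := j.isLt
      constructor
      · intro hs
        have him : i ≠ m := by
          intro e
          have hjm : j ≠ m := fun e2 => hij.ne (e.trans e2.symm)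
          exact (hmax j hjm).asymm (by rw [e, hm] at hs; exact hs)
        have hi1 : 1 ≤ (i : ℕ) := by
          rcases Nat.eq_zero_or_pos (i : ℕ) with h | h
          · exact absurd (Fin.ext (h.trans hm0.symm)) him
          · exact h
        have him' : i ≠ m' := by
          intro e
          have hjm : j ≠ m := fun e2 => by have := congrArg Fin.val e2; omega
          have hjm' : j ≠ m' := fun e2 => hij.ne (e.trans e2.symm)
          exact (hmax2 j hjm hjm').asymm (by rw [e, hm'] at hs; exact hs)
        have hkey : (i : ℕ) < (m' : ℕ) := by
          by_contra hc
          push_neg at hc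
          have hmi : m' < i :=
            Fin.lt_def.mpr (lt_of_le_of_ne hc fun e => him' (Fin.ext e.symm))
          have hone : (⟨1, by omega⟩ : Fin n) < m' := Fin.lt_def.mpr (show (1:ℕ) < (m' : ℕ) by omega)
          have h1i : σ ⟨1, by omega⟩ < σ i := cross2 _ _ le_rfl hone hmi
          exact h1 (contains_p123 (hone.trans hmi) hij h1i hs)
        have hjkey : (m' : ℕ) ≤ (j : ℕ) := by
          by_contra hc
          push_neg at hc
          have hjm : j ≠ m := fun e2 => by have := congrArg Fin.val e2; omega
          have hjm' : j ≠ m' := (Fin.lt_def.mpr hc).ne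
          exact h1 (contains_p123 hij (Fin.lt_def.mpr hc) hs
            (by rw [hm']; exact hmax2 j hjm hjm'))
        omega
      · rintro ⟨ha, hb, hc⟩
        have hilt : i < m' := Fin.lt_def.mpr (by omega)
        rcases eq_or_lt_of_le (show (m' : ℕ) ≤ (j : ℕ) by omega) with he | hlt
        · have : j = m' := Fin.ext he.symm
          rw [this, hm']
          exact hmax2 i (fun e => by have := congrArg Fin.val e; omega) hilt.ne
        · exact cross2 i j ha hilt (Fin.lt_def.mpr hlt)
  · -- σ = cPerm (m - 1)
    left
    have hmlt := m.isLt
    refine ⟨(m : ℕ) - 1, by omega, perm_eq_of_lt_iff ?_⟩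
    have zero : Fin n := ⟨0, by omega⟩
    have cross : ∀ a b : Fin n, a < m → m < b → σ a < σ b := by
      intro a b ham hmb
      have hb : σ b ≠ σ a := fun e => (ham.trans hmb).ne (σ.injective e).symm
      by_contra hc
      have hba : σ b < σ a := lt_of_le_of_ne (not_lt.mp hc) hb
      exact h2 (contains_p231 ham hmb hba (by rw [hm]; exact hmax a ham.ne))
    intro i j hij
    rw [cPerm_lt_iff (by omega) hij]
    have hiv : (i : ℕ) < (j : ℕ) := hij
    constructor
    · intro hs
      have him : i ≠ m := by
        intro e
        have hjm : j ≠ m := fun e2 => hij.ne (e.trans e2.symm)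
        exact (hmax j hjm).asymm (by rw [e, hm] at hs; exact hs)
      have hkey : (i : ℕ) < (m : ℕ) := by
        by_contra hc
        push_neg at hc
        have hmi : m < i := Fin.lt_def.mpr (lt_of_le_of_ne hc (fun e => him (Fin.ext e.symm)))
        have h0 : (⟨0, by omega⟩ : Fin n) < m := Fin.lt_def.mpr (show (0:ℕ) < (m : ℕ) by omega)
        have h0i : σ ⟨0, by omega⟩ < σ i := cross _ _ h0 hmi
        exact h1 (contains_p123 (h0.trans hmi) hij h0i hs)
      have hjkey : (m : ℕ) ≤ (j : ℕ) := by
        by_contra hc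
        push_neg at hc
        exact h1 (contains_p123 hij (Fin.lt_def.mpr hc) hs
          (by rw [hm]; exact hmax j (Fin.lt_def.mpr hc).ne))
      omega
    · rintro ⟨ha, hb⟩
      have hilt : i < m := Fin.lt_def.mpr (by omega)
      rcases eq_or_lt_of_le (show (m : ℕ) ≤ (j : ℕ) by omega) with he | hlt
      · have : j = m := Fin.ext he.symm
        rw [this, hm]
        exact hmax i hilt.ne
      · exact cross i j hilt (Fin.lt_def.mpr hlt)

lemma cPerm_inj {k k' : ℕ} (h : k < n) (h' : k' < n)
    (he : cPerm n k h = cPerm n k' h') : k = k' := by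
  have h0 := congrArg (fun s : Equiv.Perm (Fin n) => ((s ⟨0, by omega⟩ : Fin n) : ℕ)) he
  simp only [cPerm_apply_val, Fin.val_mk] at h0
  split_ifs at h0 <;> omega

lemma dPerm_inj {k k' : ℕ} (h : k + 3 ≤ n) (h' : k' + 3 ≤ n)
    (he : dPerm n k h = dPerm n k' h') : k = k' := by
  have h1 := congrArg (fun s : Equiv.Perm (Fin n) => ((s ⟨1, by omega⟩ : Fin n) : ℕ)) he
  simp only [dPerm_apply_val, Fin.val_mk] at h1
  rw [if_neg one_ne_zero, if_neg one_ne_zero,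
    if_pos (show (1:ℕ) ≤ k + 1 by omega), if_pos (show (1:ℕ) ≤ k' + 1 by omega)] at h1
  omega

lemma cPerm_ne_dPerm {k k' : ℕ} (h : k < n) (h' : k' + 3 ≤ n) :
    cPerm n k h ≠ dPerm n k' h' := by
  intro he
  have h0 := congrArg (fun s : Equiv.Perm (Fin n) => ((s ⟨0, by omega⟩ : Fin n) : ℕ)) he
  have h1 := congrArg (fun s : Equiv.Perm (Fin n) => ((s ⟨1, by omega⟩ : Fin n) : ℕ)) he
  simp only [cPerm_apply_val, dPerm_apply_val, Fin.val_mk] at h0 h1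
  rw [if_pos (Nat.zero_le k), if_pos trivial] at h0
  rw [if_neg one_ne_zero, if_pos (show (1:ℕ) ≤ k' + 1 by omega)] at h1
  split_ifs at h1 <;> omega

/-- enumeration of the avoiders -/
def eFun (n : ℕ) : Fin n ⊕ Fin (n - 2) → Equiv.Perm (Fin n) := fun x =>
  match x with
  | .inl k => cPerm n k k.isLt
  | .inr k => dPerm n k (by have := k.isLt; omega)

end Aux

theorem stmt8 :
    ∀ n, 4 ≤ n → Nat.card {σ : Equiv.Perm (Fin n) //
      PermAvoids σ p123 ∧ PermAvoids σ p231 ∧ PermAvoids σ (![3, 2, 0, 1] : Fin 4 → Fin 4)}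
      = 2 * n - 2 := by
  intro n hn
  have key : ∀ x : Fin n ⊕ Fin (n - 2),
      PermAvoids (eFun n x) p123 ∧ PermAvoids (eFun n x) p231 ∧
        PermAvoids (eFun n x) (![3, 2, 0, 1] : Fin 4 → Fin 4) := by
    rintro (k | k)
    · exact avoids_of_char_s8 _ 0 ((k : ℕ) + 1) (by omega) (fun i j hij =>
        (cPerm_lt_iff k.isLt hij).trans (by omega))
    · exact avoids_of_char_s8 _ 1 ((k : ℕ) + 2) le_rfl (fun i j hij =>
        (dPerm_lt_iff (by have := k.isLt; omega) hij).trans (by omega))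
  have hbij : Function.Bijective (fun x : Fin n ⊕ Fin (n - 2) =>
      (⟨eFun n x, key x⟩ : {σ : Equiv.Perm (Fin n) //
        PermAvoids σ p123 ∧ PermAvoids σ p231 ∧
          PermAvoids σ (![3, 2, 0, 1] : Fin 4 → Fin 4)})) := by
    constructor
    · intro x y hxy
      have hval : eFun n x = eFun n y := congrArg Subtype.val hxy
      rcases x with k | k <;> rcases y with k' | k' <;> simp only [eFun] at hval
      · exact congrArg _ (Fin.ext (cPerm_inj _ _ hval))
      · exact absurd hval (cPerm_ne_dPerm _ _)
      · exact absurd hval.symm (cPerm_ne_dPerm _ _)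
      · exact congrArg _ (Fin.ext (dPerm_inj _ _ hval))
    · rintro ⟨σ, hσ⟩
      rcases classify (by omega) σ hσ.1 hσ.2.1 hσ.2.2 with ⟨k, hk, rfl⟩ | ⟨k, hk, rfl⟩
      · exact ⟨.inl ⟨k, hk⟩, Subtype.ext rfl⟩
      · exact ⟨.inr ⟨k, by omega⟩, Subtype.ext rfl⟩
  have hcard := Nat.card_eq_of_bijective _ hbij
  rw [← hcard, Nat.card_sum, Nat.card_eq_fintype_card, Nat.card_eq_fintype_card,
    Fintype.card_fin, Fintype.card_fin]
  omega
end

section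
/- For k ≥ 2 and all n ≥ 0, the number of permutations in S_n avoiding the patterns 132, 213, and (k, k−1, ..., 2, 1) equals the sum over j from 0 to k−2 of C(n−1, j). -/
variable {n : ℕ}

private lemma fin3_mk0 : ∀ (h : 0 < 3), (⟨0, h⟩ : Fin 3) = 0 := fun _ => rfl
private lemma fin3_mk1 : ∀ (h : 1 < 3), (⟨1, h⟩ : Fin 3) = 1 := fun _ => rfl
private lemma fin3_mk2 : ∀ (h : 2 < 3), (⟨2, h⟩ : Fin 3) = 2 := fun _ => rfl
private lemma vec3_0 {α : Type*} (a b c : α) : ![a,b,c] 0 = a := rfl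
private lemma vec3_1 {α : Type*} (a b c : α) : ![a,b,c] 1 = b := rfl
private lemma vec3_2 {α : Type*} (a b c : α) : ![a,b,c] 2 = c := rfl

lemma contains132_s10 (σ : Equiv.Perm (Fin n)) (i j l : Fin n) (hij : i < j) (hjl : j < l)
    (h1 : σ i < σ l) (h2 : σ l < σ j) : PermContains σ p132 := by
  have h3 : σ i < σ j := h1.trans h2
  refine ⟨![i, j, l], ?_, ?_⟩
  · intro a b hab
    fin_cases a <;> fin_cases b <;>
      simp only [fin3_mk0, fin3_mk1, fin3_mk2, vec3_0, vec3_1, vec3_2] <;>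
      first
        | exact hij | exact hjl | exact hij.trans hjl
        | exact absurd hab (by decide)
  · rw [Fin.lt_def] at h1 h2 h3
    intro a b
    fin_cases a <;> fin_cases b <;>
      simp only [fin3_mk0, fin3_mk1, fin3_mk2, vec3_0, vec3_1, vec3_2, p132,
        Fin.lt_def, Fin.val_zero, Fin.val_one, Fin.val_two] <;>
      omega

lemma contains213 (σ : Equiv.Perm (Fin n)) (i j l : Fin n) (hij : i < j) (hjl : j < l)
    (h1 : σ j < σ i) (h2 : σ i < σ l) : PermContains σ p213 := by
  have h3 : σ j < σ l := h1.trans h2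
  refine ⟨![i, j, l], ?_, ?_⟩
  · intro a b hab
    fin_cases a <;> fin_cases b <;>
      simp only [fin3_mk0, fin3_mk1, fin3_mk2, vec3_0, vec3_1, vec3_2] <;>
      first
        | exact hij | exact hjl | exact hij.trans hjl
        | exact absurd hab (by decide)
  · rw [Fin.lt_def] at h1 h2 h3
    intro a b
    fin_cases a <;> fin_cases b <;>
      simp only [fin3_mk0, fin3_mk1, fin3_mk2, vec3_0, vec3_1, vec3_2, p213,
        Fin.lt_def, Fin.val_zero, Fin.val_one, Fin.val_two] <;>
      omega

def IsDesc (σ : Equiv.Perm (Fin n)) (t : ℕ) : Prop :=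
  ∃ h : t + 1 < n, σ ⟨t+1, h⟩ < σ ⟨t, by omega⟩

lemma fin_ne_of_val_ne {a b : Fin n} (h : a.1 ≠ b.1) : σ₀ = σ₀ := rfl

lemma perm_lt_of_ne (σ : Equiv.Perm (Fin n)) {a b : Fin n} (hne : a ≠ b)
    (h : ¬ σ b < σ a) : σ a < σ b := by
  rcases lt_trichotomy (σ a) (σ b) with h1 | h1 | h1
  · exact h1
  · exact absurd (σ.injective h1) hne
  · exact absurd h1 h

lemma ascRun (σ : Equiv.Perm (Fin n)) :
    ∀ b a : ℕ, ∀ (ha : a < n) (hb : b < n), a < b →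
    (∀ t, a ≤ t → t < b → ¬ IsDesc σ t) → σ ⟨a, ha⟩ < σ ⟨b, hb⟩ := by
  intro b
  induction b with
  | zero => omega
  | succ m ih =>
    intro a ha hb hab hnd
    have key : ∀ (hm : m < n), σ ⟨m, hm⟩ < σ ⟨m+1, hb⟩ := by
      intro hm
      refine perm_lt_of_ne σ (Fin.ne_of_val_ne (by simp)) ?_
      intro hlt
      exact hnd m (by omega) (by omega) ⟨hb, hlt⟩
    rcases Nat.eq_or_lt_of_le (Nat.succ_le_of_lt hab) with h | h
    · have : a = m := by omega
      subst this; exact key ha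
    · exact (ih a ha (by omega) (by omega)
        (fun t h1 h2 => hnd t h1 (by omega))).trans (key (by omega))

lemma existsDesc (σ : Equiv.Perm (Fin n)) {a b : ℕ} (ha : a < n) (hb : b < n)
    (hab : a < b) (h : ¬ σ ⟨a, ha⟩ < σ ⟨b, hb⟩) :
    ∃ t, a ≤ t ∧ t < b ∧ IsDesc σ t := by
  by_contra hc
  push_neg at hc
  exact h (ascRun σ b a ha hb hab (fun t h1 h2 hd => hc t h1 h2 hd))

section Avoid
variable {σ : Equiv.Perm (Fin n)} (h132 : PermAvoids σ p132) (h213 : PermAvoids σ p213)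

include h132 h213 in
lemma midBound {a t b : ℕ} (ha : a < n) (ht : t < n) (hb : b < n)
    (h1 : a < t) (h2 : t < b) (hab : σ ⟨a, ha⟩ < σ ⟨b, hb⟩) :
    σ ⟨a, ha⟩ < σ ⟨t, ht⟩ ∧ σ ⟨t, ht⟩ < σ ⟨b, hb⟩ := by
  have hne1 : (⟨a, ha⟩ : Fin n) ≠ ⟨t, ht⟩ := Fin.ne_of_val_ne (show a ≠ t by omega)
  have hne2 : (⟨t, ht⟩ : Fin n) ≠ ⟨b, hb⟩ := Fin.ne_of_val_ne (show t ≠ b by omega)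
  have hlt1 : (⟨a, ha⟩ : Fin n) < ⟨t, ht⟩ := Fin.mk_lt_mk.mpr (by omega)
  have hlt2 : (⟨t, ht⟩ : Fin n) < ⟨b, hb⟩ := Fin.mk_lt_mk.mpr (by omega)
  constructor
  · refine perm_lt_of_ne σ hne1 (fun hlt => ?_)
    exact h213 (contains213 σ _ _ _ hlt1 hlt2 hlt hab)
  · refine perm_lt_of_ne σ hne2 (fun hlt => ?_)
    exact h132 (contains132_s10 σ _ _ _ hlt1 hlt2 hab hlt)

include h132 h213 in
lemma incrInterval {a b t t' : ℕ} (ha : a < n) (hb : b < n) (ht : t < n) (ht' : t' < n)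
    (h1 : a ≤ t) (h2 : t < t') (h3 : t' ≤ b)
    (hab : σ ⟨a, ha⟩ < σ ⟨b, hb⟩) : σ ⟨t, ht⟩ < σ ⟨t', ht'⟩ := by
  have hab' : a < b := by omega
  rcases Nat.eq_or_lt_of_le h1 with rfl | hat
  · rcases Nat.eq_or_lt_of_le h3 with rfl | htb
    · exact hab
    · exact (midBound h132 h213 ha ht' hb h2 htb hab).1
  · rcases Nat.eq_or_lt_of_le h3 with rfl | htb
    · exact (midBound h132 h213 ha ht ht' hat h2 hab).2
    · have hm1 := midBound h132 h213 ha ht hb hat (by omega) hab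
      have hm2 := midBound h132 h213 ha ht' hb (by omega) htb hab
      refine perm_lt_of_ne σ (Fin.ne_of_val_ne (show t ≠ t' by omega)) (fun hlt => ?_)
      exact h132 (contains132_s10 σ ⟨a, ha⟩ ⟨t, ht⟩ ⟨t', ht'⟩
        (Fin.mk_lt_mk.mpr (by omega)) (Fin.mk_lt_mk.mpr (by omega)) hm2.1 hlt)

include h132 h213 in
lemma descGives {a b t : ℕ} (ha : a < n) (hb : b < n)
    (h1 : a ≤ t) (h2 : t < b) (hd : IsDesc σ t) : σ ⟨b, hb⟩ < σ ⟨a, ha⟩ := by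
  obtain ⟨htn, hlt⟩ := hd
  refine perm_lt_of_ne σ (Fin.ne_of_val_ne (show b ≠ a by omega)) (fun h => ?_)
  exact absurd (incrInterval h132 h213 ha hb (by omega) htn h1 (Nat.lt_succ_self t) (by omega) h)
    (not_lt_of_gt hlt)

include h132 h213 in
lemma order_char {i j : Fin n} (hij : i < j) :
    σ i < σ j ↔ ∀ t, (i : ℕ) ≤ t → t < (j : ℕ) → ¬ IsDesc σ t := by
  constructor
  · intro h t h1 h2 hd
    have := descGives h132 h213 i.isLt j.isLt h1 h2 hd
    simp only [Fin.eta] at this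
    exact absurd this (not_lt_of_gt h)
  · intro h
    have := ascRun σ j i i.isLt j.isLt hij h
    simpa using this

end Avoid

noncomputable def dsc (σ : Equiv.Perm (Fin n)) : Finset (Fin (n-1)) :=
  letI := Classical.decPred (fun d : Fin (n-1) => IsDesc σ d.1)
  Finset.univ.filter (fun d : Fin (n-1) => IsDesc σ d.1)

lemma mem_dsc {σ : Equiv.Perm (Fin n)} {d : Fin (n-1)} : d ∈ dsc σ ↔ IsDesc σ d.1 := by
  classical
  simp [dsc]

lemma lt_iff_not_lt (σ : Equiv.Perm (Fin n)) {i j : Fin n} (hij : i ≠ j) :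
    σ i < σ j ↔ ¬ σ j < σ i :=
  ⟨fun h => lt_asymm h, fun h => perm_lt_of_ne σ hij h⟩

section Avoid2
variable {k : ℕ} {σ : Equiv.Perm (Fin n)}
  (h132 : PermAvoids σ p132) (h213 : PermAvoids σ p213)

include h132 h213 in
lemma containsDec (hk : 2 ≤ k) (hcard : k - 1 ≤ (dsc σ).card) :
    PermContains σ (fun i : Fin k => i.rev) := by
  obtain ⟨D, hDsub, hDcard⟩ := Finset.exists_subset_card_eq hcard
  let e : Fin (k-1) ≃o (D : Finset (Fin (n-1))) := D.orderIsoOfFin hDcard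
  have hval : ∀ x : Fin (k-1), ((e x : Fin (n-1)) : ℕ) < n - 1 := fun x => (e x).1.isLt
  have hdesc : ∀ x : Fin (k-1), IsDesc σ ((e x : Fin (n-1)) : ℕ) :=
    fun x => mem_dsc.mp (hDsub (e x).2)
  -- f : positions
  let f : Fin k → Fin n := fun t =>
    if h : t.1 < k - 1 then ⟨((e ⟨t.1, h⟩ : Fin (n-1)) : ℕ), by have := hval ⟨t.1, h⟩; omega⟩
    else ⟨((e ⟨k-2, by omega⟩ : Fin (n-1)) : ℕ) + 1, by have := hval ⟨k-2, by omega⟩; omega⟩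
  have hfl : ∀ (t : Fin k) (h : t.1 < k - 1),
      f t = ⟨((e ⟨t.1, h⟩ : Fin (n-1)) : ℕ), by have := hval ⟨t.1, h⟩; omega⟩ := by
    intro t h; simp only [f, dif_pos h]
  have hfr : ∀ (t : Fin k), ¬ t.1 < k - 1 →
      f t = ⟨((e ⟨k-2, by omega⟩ : Fin (n-1)) : ℕ) + 1, by have := hval ⟨k-2, by omega⟩; omega⟩ := by
    intro t h; simp only [f, dif_neg h]
  have emono : ∀ {x y : Fin (k-1)}, x ≤ y → ((e x : Fin (n-1)) : ℕ) ≤ ((e y : Fin (n-1)) : ℕ) := by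
    intro x y hxy
    have : e x ≤ e y := e.monotone hxy
    exact_mod_cast this
  have emono' : ∀ {x y : Fin (k-1)}, x < y → ((e x : Fin (n-1)) : ℕ) < ((e y : Fin (n-1)) : ℕ) := by
    intro x y hxy
    have : e x < e y := e.strictMono hxy
    exact_mod_cast this
  have hmono : StrictMono f := by
    intro a b hab
    by_cases hb : b.1 < k - 1
    · have ha : a.1 < k - 1 := lt_trans hab hb
      rw [hfl a ha, hfl b hb, Fin.mk_lt_mk]
      exact emono' (by exact hab)
    · by_cases ha : a.1 < k - 1
      · rw [hfl a ha, hfr b hb, Fin.mk_lt_mk]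
        have : a.1 ≤ k - 2 := by omega
        have := emono (x := ⟨a.1, ha⟩) (y := ⟨k-2, by omega⟩) (by simpa [Fin.le_def])
        omega
      · exfalso
        have := a.isLt; have := b.isLt; have := hab
        rw [Fin.lt_def] at this; omega
  refine ⟨f, hmono, ?_⟩
  have hanti : ∀ {i j : Fin k}, j < i → σ (f i) < σ (f j) := by
    intro i j hji
    -- descent at position e j
    have hj : j.1 < k - 1 := by have := i.isLt; have := hji; rw [Fin.lt_def] at this; omega
    have hd := hdesc ⟨j.1, hj⟩
    rw [hfl j hj]
    have hle : ((e ⟨j.1, hj⟩ : Fin (n-1)) : ℕ) < (f i : ℕ) := by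
      by_cases hi : i.1 < k - 1
      · rw [hfl i hi]
        exact emono' (show (⟨j.1, hj⟩ : Fin (k-1)) < ⟨i.1, hi⟩ from by
          rw [Fin.lt_def]; exact hji)
      · have hmn := emono (x := ⟨j.1, hj⟩) (y := ⟨k-2, by omega⟩) (by rw [Fin.le_def]; simp; omega)
        rw [hfr i hi]
        exact lt_of_le_of_lt hmn (Nat.lt_succ_self _)
    have := descGives h132 h213 (by have := hval ⟨j.1, hj⟩; omega) (f i).isLt
      (le_refl ((e ⟨j.1, hj⟩ : Fin (n-1)) : ℕ)) hle hd
    simpa using this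
  intro i j
  rw [Fin.rev_lt_rev]
  constructor
  · exact fun h => hanti h
  · intro h
    rcases lt_trichotomy j i with h1 | h1 | h1
    · exact h1
    · subst h1; exact absurd h (lt_irrefl _)
    · exact absurd (hanti h1) (lt_asymm h)

lemma card_ge_of_containsDec (hk : 2 ≤ k)
    (h : PermContains σ (fun i : Fin k => i.rev)) : k - 1 ≤ (dsc σ).card := by
  obtain ⟨f, hf, hp⟩ := h
  have hanti : ∀ {i j : Fin k}, j < i → σ (f i) < σ (f j) :=
    fun {i j} h => (hp i j).1 (Fin.rev_lt_rev.mpr h)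
  have hstep : ∀ t : Fin (k-1), ∃ d,
      (f ⟨t.1, by have := t.isLt; omega⟩ : ℕ) ≤ d ∧
      d < (f ⟨t.1 + 1, by have := t.isLt; omega⟩ : ℕ) ∧ IsDesc σ d := by
    intro t
    have hcs : (⟨t.1, by have := t.isLt; omega⟩ : Fin k) < ⟨t.1 + 1, by have := t.isLt; omega⟩ :=
      Fin.mk_lt_mk.mpr (Nat.lt_succ_self _)
    have hlt : f ⟨t.1, by have := t.isLt; omega⟩ < f ⟨t.1 + 1, by have := t.isLt; omega⟩ := hf hcs
    have hnot : ¬ σ ⟨(f ⟨t.1, by have := t.isLt; omega⟩ : ℕ), (f _).isLt⟩ <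
        σ ⟨(f ⟨t.1 + 1, by have := t.isLt; omega⟩ : ℕ), (f _).isLt⟩ := by
      simp only [Fin.eta]
      exact lt_asymm (hanti hcs)
    exact existsDesc σ (f _).isLt (f _).isLt hlt hnot
  choose d hd1 hd2 hd3 using hstep
  have hdn : ∀ t, d t < n - 1 := by
    intro t
    obtain ⟨h1, _⟩ := hd3 t
    omega
  have hinj : ∀ t t' : Fin (k-1), t < t' → d t < d t' := by
    intro t t' htt
    have hle : (⟨t.1 + 1, by have := t.isLt; omega⟩ : Fin k) ≤ ⟨t'.1, by have := t'.isLt; omega⟩ := by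
      rw [Fin.le_def]; rw [Fin.lt_def] at htt; exact htt
    have hff : f ⟨t.1 + 1, by have := t.isLt; omega⟩ ≤ f ⟨t'.1, by have := t'.isLt; omega⟩ :=
      hf.monotone hle
    have := hd2 t; have := hd1 t'
    rw [Fin.le_def] at hff
    omega
  have : ((Finset.univ : Finset (Fin (k-1))).image (fun t => (⟨d t, hdn t⟩ : Fin (n-1)))).card
      = k - 1 := by
    rw [Finset.card_image_of_injective _ ?_, Finset.card_univ, Fintype.card_fin]
    intro a b hab
    rcases lt_trichotomy a b with h | h | h
    · exact absurd (hinj a b h) (by simp [Fin.ext_iff] at hab; omega)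
    · exact h
    · exact absurd (hinj b a h) (by simp [Fin.ext_iff] at hab; omega)
  rw [← this]
  apply Finset.card_le_card
  intro x hx
  simp only [Finset.mem_image] at hx
  obtain ⟨t, _, rfl⟩ := hx
  exact mem_dsc.mpr (hd3 t)

end Avoid2

lemma perm_eq_of_dsc_eq {σ τ : Equiv.Perm (Fin n)}
    (hσ1 : PermAvoids σ p132) (hσ2 : PermAvoids σ p213)
    (hτ1 : PermAvoids τ p132) (hτ2 : PermAvoids τ p213)
    (h : dsc σ = dsc τ) : σ = τ := by
  have hdesc : ∀ t, IsDesc σ t ↔ IsDesc τ t := by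
    intro t
    by_cases ht : t < n - 1
    · have := Finset.ext_iff.mp h ⟨t, ht⟩
      simpa [mem_dsc] using this
    · constructor <;> (intro ⟨h1, _⟩; omega)
  have horder : ∀ i j : Fin n, σ i < σ j ↔ τ i < τ j := by
    have key : ∀ i j : Fin n, i < j → (σ i < σ j ↔ τ i < τ j) := by
      intro i j hij
      rw [order_char hσ1 hσ2 hij, order_char hτ1 hτ2 hij]
      constructor
      · intro hh t h1 h2 hd
        exact hh t h1 h2 ((hdesc t).mpr hd)
      · intro hh t h1 h2 hd
        exact hh t h1 h2 ((hdesc t).mp hd)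
    intro i j
    rcases lt_trichotomy i j with h1 | h1 | h1
    · exact key i j h1
    · subst h1; simp
    · rw [lt_iff_not_lt σ (ne_of_gt h1), lt_iff_not_lt τ (ne_of_gt h1)]
      exact not_congr (key j i h1)
  have hF : StrictMono (fun v => τ (σ.symm v)) := by
    intro a b hab
    have : σ (σ.symm a) < σ (σ.symm b) := by simpa using hab
    exact (horder _ _).mp this
  have hid : (fun v => τ (σ.symm v)) = (id : Fin n → Fin n) := by
    haveI : WellFoundedLT (Fin n) := inferInstance
    apply (StrictMono.range_inj (β := Fin n) (γ := Fin n) hF (strictMono_id)).mp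
    rw [Set.range_id]
    exact Set.range_eq_univ.mpr (σ.symm.trans τ).surjective
  ext x
  have := congrFun hid (σ x)
  simp only [Equiv.symm_apply_apply, id_eq] at this
  exact congrArg Fin.val this.symm

section Constr
variable (S : Finset (Fin (n-1)))

def blk (i : ℕ) : ℕ := (S.filter (fun s : Fin (n-1) => (s : ℕ) < i)).card

lemma blk_mono {i j : ℕ} (hij : i ≤ j) : blk S i ≤ blk S j :=
  Finset.card_le_card (Finset.monotone_filter_right S (fun s _ hs => lt_of_lt_of_le hs hij))

lemma blk_le : ∀ i, blk S i ≤ n - 1 := fun _ =>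
  le_trans (Finset.card_filter_le _ _) (le_trans (Finset.card_le_univ S) (le_of_eq (by simp)))

lemma blk_lt_succ_iff {t : ℕ} (ht : t < n - 1) :
    blk S t < blk S (t+1) ↔ (⟨t, ht⟩ : Fin (n-1)) ∈ S := by
  constructor
  · intro h
    by_contra hmem
    have hsub : S.filter (fun s : Fin (n-1) => (s : ℕ) < t+1) ⊆
        S.filter (fun s : Fin (n-1) => (s : ℕ) < t) := by
      intro s hs
      rw [Finset.mem_filter] at hs ⊢
      refine ⟨hs.1, ?_⟩
      rcases Nat.lt_or_ge (s : ℕ) t with h1 | h1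
      · exact h1
      · exfalso
        have hst : s = ⟨t, ht⟩ := Fin.ext (show (s : ℕ) = t by omega)
        exact hmem (hst ▸ hs.1)
    have := Finset.card_le_card hsub
    unfold blk at h
    omega
  · intro h
    apply Finset.card_lt_card
    rw [Finset.ssubset_iff_of_subset (Finset.monotone_filter_right S
      (fun s _ (hs : (s : ℕ) < t) => show (s : ℕ) < t + 1 by omega))]
    exact ⟨⟨t, ht⟩, Finset.mem_filter.mpr ⟨h, by simp⟩, fun hc => by
      have := (Finset.mem_filter.mp hc).2; simp at this⟩

def gfun (i : Fin n) : ℕ := (n - blk S i.1) * n + i.1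

lemma gfun_lt_iff (i j : Fin n) :
    gfun S i < gfun S j ↔ (blk S j.1 < blk S i.1 ∨ (blk S i.1 = blk S j.1 ∧ i.1 < j.1)) := by
  have hin := i.isLt; have hjn := j.isLt
  have hbi := blk_le S i.1; have hbj := blk_le S j.1
  have key : ∀ a b x y : ℕ, a < b → x < n → a * n + x < b * n + y := by
    intro a b x y hab hx
    have h1 : (a + 1) * n ≤ b * n := Nat.mul_le_mul_right n hab
    have h2 : (a + 1) * n = a * n + n := by ring
    omega
  unfold gfun
  rcases lt_trichotomy (blk S i.1) (blk S j.1) with h | h | h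
  · have := key (n - blk S j.1) (n - blk S i.1) j.1 i.1 (by omega) hjn
    constructor
    · intro hc; omega
    · intro hc; omega
  · rw [h]
    constructor
    · intro hc; omega
    · intro hc; omega
  · have := key (n - blk S i.1) (n - blk S j.1) i.1 j.1 (by omega) hin
    constructor
    · intro hc; omega
    · intro hc; omega

lemma gfun_inj : Function.Injective (gfun S) := by
  intro i j h
  by_contra hne
  have hne' : i.1 ≠ j.1 := fun hc => hne (Fin.ext hc)
  rcases lt_trichotomy (blk S i.1) (blk S j.1) with hb | hb | hb
  · have := (gfun_lt_iff S j i).mpr (Or.inl hb); omega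
  · rcases Nat.lt_or_ge i.1 j.1 with hc | hc
    · have := (gfun_lt_iff S i j).mpr (Or.inr ⟨hb, hc⟩); omega
    · have := (gfun_lt_iff S j i).mpr (Or.inr ⟨hb.symm, by omega⟩); omega
  · have := (gfun_lt_iff S i j).mpr (Or.inl hb); omega

lemma gfun_card (S : Finset (Fin (n-1))) : (Finset.univ.image (gfun S)).card = n := by
  rw [Finset.card_image_of_injective _ (gfun_inj S), Finset.card_univ, Fintype.card_fin]

noncomputable def permOf (S : Finset (Fin (n-1))) : Equiv.Perm (Fin n) :=
  Equiv.ofBijective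
    (fun i => ((Finset.univ.image (gfun S)).orderIsoOfFin (gfun_card S)).symm
      ⟨gfun S i, Finset.mem_image.mpr ⟨i, Finset.mem_univ i, rfl⟩⟩)
    (by
      rw [← Finite.injective_iff_bijective]
      intro a b hab
      have := ((Finset.univ.image (gfun S)).orderIsoOfFin (gfun_card S)).symm.injective hab
      exact gfun_inj S (congrArg Subtype.val this))

lemma permOf_lt_iff (S : Finset (Fin (n-1))) (i j : Fin n) :
    permOf S i < permOf S j ↔
      (blk S j.1 < blk S i.1 ∨ (blk S i.1 = blk S j.1 ∧ i.1 < j.1)) := by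
  rw [← gfun_lt_iff]
  show ((Finset.univ.image (gfun S)).orderIsoOfFin (gfun_card S)).symm _ <
    ((Finset.univ.image (gfun S)).orderIsoOfFin (gfun_card S)).symm _ ↔ _
  rw [OrderIso.lt_iff_lt]
  exact Subtype.mk_lt_mk

lemma permOf_avoids132 (S : Finset (Fin (n-1))) : PermAvoids (permOf S) p132 := by
  rintro ⟨f, hf, hp⟩
  have h01 : permOf S (f 0) < permOf S (f 1) := (hp 0 1).mp (by decide)
  have h02 : permOf S (f 0) < permOf S (f 2) := (hp 0 2).mp (by decide)
  have h21 : permOf S (f 2) < permOf S (f 1) := (hp 2 1).mp (by decide)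
  have hf01 : (f 0 : ℕ) < (f 1 : ℕ) := hf (by decide)
  have hf12 : (f 1 : ℕ) < (f 2 : ℕ) := hf (by decide)
  rw [permOf_lt_iff] at h01 h02 h21
  have m01 := blk_mono S (le_of_lt hf01)
  have m12 := blk_mono S (le_of_lt hf12)
  omega

lemma permOf_avoids213 (S : Finset (Fin (n-1))) : PermAvoids (permOf S) p213 := by
  rintro ⟨f, hf, hp⟩
  have h10 : permOf S (f 1) < permOf S (f 0) := (hp 1 0).mp (by decide)
  have h02 : permOf S (f 0) < permOf S (f 2) := (hp 0 2).mp (by decide)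
  have hf01 : (f 0 : ℕ) < (f 1 : ℕ) := hf (by decide)
  have hf12 : (f 1 : ℕ) < (f 2 : ℕ) := hf (by decide)
  rw [permOf_lt_iff] at h10 h02
  have m01 := blk_mono S (le_of_lt hf01)
  have m12 := blk_mono S (le_of_lt hf12)
  omega

lemma dsc_permOf (S : Finset (Fin (n-1))) : dsc (permOf S) = S := by
  ext d
  rw [mem_dsc]
  have hd := d.isLt
  constructor
  · rintro ⟨h1, hlt⟩
    rw [permOf_lt_iff] at hlt
    simp only [] at hlt
    have : blk S d.1 < blk S (d.1+1) := by omega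
    have := (blk_lt_succ_iff S hd).mp this
    simpa using this
  · intro hmem
    refine ⟨by omega, ?_⟩
    rw [permOf_lt_iff]
    left
    exact (blk_lt_succ_iff S hd).mpr (by simpa using hmem)

end Constr

lemma count_finsets (m c : ℕ) :
    Nat.card {S : Finset (Fin m) // S.card ≤ c} = ∑ j ∈ Finset.range (c+1), Nat.choose m j := by
  classical
  rw [Nat.card_eq_fintype_card, Fintype.card_subtype]
  have hset : (Finset.univ.filter (fun S : Finset (Fin m) => S.card ≤ c)) =
      (Finset.range (c+1)).biUnion (fun j => Finset.powersetCard j Finset.univ) := by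
    ext S
    simp only [Finset.mem_filter, Finset.mem_univ, true_and, Finset.mem_biUnion,
      Finset.mem_range, Finset.mem_powersetCard]
    constructor
    · intro h
      exact ⟨S.card, by omega, Finset.subset_univ S, rfl⟩
    · rintro ⟨j, hj, _, rfl⟩
      omega
  rw [hset, Finset.card_biUnion]
  · apply Finset.sum_congr rfl
    intro j _
    rw [Finset.card_powersetCard, Finset.card_univ, Fintype.card_fin]
  · intro a _ b _ hab
    simp only [Finset.disjoint_left]
    intro S hS1 hS2
    rw [Finset.mem_powersetCard] at hS1 hS2
    exact hab (hS1.2.symm.trans hS2.2)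

theorem stmt10 (k : ℕ) (hk : 2 ≤ k) :
    ∀ n : ℕ, Nat.card {σ : Equiv.Perm (Fin n) //
      PermAvoids σ p132 ∧ PermAvoids σ p213 ∧ PermAvoids σ (fun i : Fin k => i.rev)}
      = ∑ j ∈ Finset.range (k - 1), Nat.choose (n - 1) j := by
  intro n
  have hEq : Nat.card {σ : Equiv.Perm (Fin n) //
      PermAvoids σ p132 ∧ PermAvoids σ p213 ∧ PermAvoids σ (fun i : Fin k => i.rev)}
      = Nat.card {S : Finset (Fin (n-1)) // S.card ≤ k - 2} := by
    apply Nat.card_congr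
    refine Equiv.ofBijective (fun x => ⟨dsc x.1, ?_⟩) ⟨?_, ?_⟩
    · by_contra hc
      exact x.2.2.2 (containsDec x.2.1 x.2.2.1 hk (by omega))
    · rintro ⟨σ, h1, h2, h3⟩ ⟨τ, h4, h5, h6⟩ h
      exact Subtype.ext (perm_eq_of_dsc_eq h1 h2 h4 h5 (congrArg Subtype.val h))
    · rintro ⟨S, hS⟩
      refine ⟨⟨permOf S, permOf_avoids132 S, permOf_avoids213 S, ?_⟩, ?_⟩
      · intro hc
        have := card_ge_of_containsDec hk hc
        rw [dsc_permOf] at this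
        omega
      · exact Subtype.ext (dsc_permOf S)
  rw [hEq]
  have : k - 1 = (k - 2) + 1 := by omega
  rw [this]
  exact count_finsets (n-1) (k-2)
end

section
/- The number of permutations in S_n avoiding the patterns 132, 213, and 1234 equals the n-th Tribonacci number: the count c(n) satisfies c(n) = c(n−1) + c(n−2) + c(n−3) for n ≥ 5. -/
namespace Stmt11
open Equiv

def Q {n : ℕ} (σ : Equiv.Perm (Fin n)) : Prop :=
  ∀ i j : Fin n, i < j → σ i < σ j →
    ((σ j : ℕ) = (σ i : ℕ) + ((j : ℕ) - (i : ℕ)) ∧ (j : ℕ) - (i : ℕ) ≤ 2)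

lemma strictMono_vec3 {n : ℕ} {x y z : Fin n} (hxy : x < y) (hyz : y < z) :
    StrictMono ![x, y, z] := by
  intro i j hij
  fin_cases i <;> fin_cases j <;>
    first
      | exact absurd hij (by decide)
      | exact hxy
      | exact hyz
      | exact hxy.trans hyz

lemma contains3 {n : ℕ} (σ : Equiv.Perm (Fin n)) (p : Fin 3 → Fin 3) (x y z : Fin n)
    (hxy : x < y) (hyz : y < z)
    (h : ∀ i j : Fin 3, p i < p j ↔ σ (![x, y, z] i) < σ (![x, y, z] j)) :
    PermContains σ p :=
  ⟨![x, y, z], strictMono_vec3 hxy hyz, h⟩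

lemma contains3' {n : ℕ} (σ : Equiv.Perm (Fin n)) (p : Fin 3 → Fin 3) (x y z : Fin n)
    (hxy : x < y) (hyz : y < z)
    (h01 : p 0 < p 1 ↔ (σ x : ℕ) < σ y) (h02 : p 0 < p 2 ↔ (σ x : ℕ) < σ z)
    (h12 : p 1 < p 2 ↔ (σ y : ℕ) < σ z) (h10 : p 1 < p 0 ↔ (σ y : ℕ) < σ x)
    (h20 : p 2 < p 0 ↔ (σ z : ℕ) < σ x) (h21 : p 2 < p 1 ↔ (σ z : ℕ) < σ y) :
    PermContains σ p := by
  apply contains3 σ p x y z hxy hyz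
  intro a b
  match a, b with
  | 0, 0 => exact iff_of_false (lt_irrefl _) (lt_irrefl _)
  | 1, 1 => exact iff_of_false (lt_irrefl _) (lt_irrefl _)
  | 2, 2 => exact iff_of_false (lt_irrefl _) (lt_irrefl _)
  | 0, 1 => exact h01.trans Fin.lt_def.symm
  | 0, 2 => exact h02.trans Fin.lt_def.symm
  | 1, 2 => exact h12.trans Fin.lt_def.symm
  | 1, 0 => exact h10.trans Fin.lt_def.symm
  | 2, 0 => exact h20.trans Fin.lt_def.symm
  | 2, 1 => exact h21.trans Fin.lt_def.symm

lemma contains_213 {n : ℕ} (σ : Equiv.Perm (Fin n)) {x y z : Fin n}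
    (hxy : x < y) (hyz : y < z) (h1 : (σ y : ℕ) < σ x) (h2 : (σ x : ℕ) < σ z) :
    PermContains σ p213 := by
  apply contains3' σ p213 x y z hxy hyz <;>
    first
      | exact iff_of_true (by decide) (by omega)
      | exact iff_of_false (by decide) (by omega)

lemma contains_132 {n : ℕ} (σ : Equiv.Perm (Fin n)) {x y z : Fin n}
    (hxy : x < y) (hyz : y < z) (h1 : (σ x : ℕ) < σ z) (h2 : (σ z : ℕ) < σ y) :
    PermContains σ p132 := by
  apply contains3' σ p132 x y z hxy hyz <;>
    first
      | exact iff_of_true (by decide) (by omega)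
      | exact iff_of_false (by decide) (by omega)

lemma run1 {n : ℕ} {σ : Equiv.Perm (Fin n)}
    (h132 : PermAvoids σ p132) (h213 : PermAvoids σ p213)
    (i j : Fin n) (hj : (j : ℕ) = (i : ℕ) + 1) (hlt : (σ i : ℕ) < σ j) :
    (σ j : ℕ) = (σ i : ℕ) + 1 := by
  by_contra hne
  have h2 : (σ i : ℕ) + 1 < σ j := by omega
  have hvn : (σ i : ℕ) + 1 < n := lt_trans h2 (σ j).isLt
  set v : Fin n := ⟨(σ i : ℕ) + 1, hvn⟩ with hv
  set q := σ.symm v with hq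
  have hqv : σ q = v := σ.apply_symm_apply v
  have hqval : (σ q : ℕ) = (σ i : ℕ) + 1 := by rw [hqv]
  have hqi : (q : ℕ) ≠ (i : ℕ) := by
    intro h; have : q = i := Fin.ext h
    rw [this] at hqval; omega
  have hqj : (q : ℕ) ≠ (j : ℕ) := by
    intro h; have : q = j := Fin.ext h
    rw [this] at hqval; omega
  rcases lt_or_gt_of_ne hqi with h | h
  · exact h213 (contains_213 σ (show q < i from h) (show i < j by
      rw [Fin.lt_def]; omega) (by omega) (by omega))
  · have hjq : (j : ℕ) < q := by omega
    exact h132 (contains_132 σ (show i < j by rw [Fin.lt_def]; omega)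
      (show j < q from hjq) (by omega) (by omega))

lemma run {n : ℕ} {σ : Equiv.Perm (Fin n)}
    (h132 : PermAvoids σ p132) (h213 : PermAvoids σ p213) :
    ∀ d : ℕ, ∀ i j : Fin n, (j : ℕ) = (i : ℕ) + d + 1 → (σ i : ℕ) < σ j →
      (σ j : ℕ) = (σ i : ℕ) + (d + 1) := by
  intro d
  induction d with
  | zero => intro i j hj hlt; exact run1 h132 h213 i j hj hlt
  | succ d ih =>
    intro i j hj hlt
    have hk : (i : ℕ) + 1 < n := by have := j.isLt; omega
    set k : Fin n := ⟨(i : ℕ) + 1, hk⟩ with hkdef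
    have hik : i < k := by rw [Fin.lt_def]; simp [hkdef]
    have hkj : k < j := by rw [Fin.lt_def]; simp [hkdef]; omega
    have hne1 : (σ k : ℕ) ≠ (σ i : ℕ) := by
      intro h
      have h' := σ.injective (Fin.ext h)
      have := congrArg Fin.val h'
      simp [hkdef] at this
    have hne2 : (σ k : ℕ) ≠ (σ j : ℕ) := by
      intro h
      have h' := σ.injective (Fin.ext h)
      have := congrArg Fin.val h'
      simp [hkdef] at this
      omega
    rcases lt_or_gt_of_ne hne1 with hcase | hcase
    · -- σ k < σ i : 213 pattern at (i, k, j)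
      exact absurd (contains_213 σ hik hkj (by omega) (by omega)) h213
    · rcases lt_or_gt_of_ne hne2 with hcase2 | hcase2
      · -- σ i < σ k < σ j : use run1 and ih
        have e1 : (σ k : ℕ) = (σ i : ℕ) + 1 :=
          run1 h132 h213 i k (by simp [hkdef]) (by omega)
        have e2 : (σ j : ℕ) = (σ k : ℕ) + (d + 1) :=
          ih k j (by simp [hkdef]; omega) (by omega)
        omega
      · -- σ j < σ k : 132 pattern at (i, k, j)
        exact absurd (contains_132 σ hik hkj (by omega) (by omega)) h132

lemma strictMono_vec4 {α : Type*} [Preorder α] {w x y z : α}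
    (h01 : w < x) (h12 : x < y) (h23 : y < z) : StrictMono ![w, x, y, z] := by
  intro i j hij
  match i, j with
  | 0, 1 => exact h01
  | 0, 2 => exact h01.trans h12
  | 0, 3 => exact (h01.trans h12).trans h23
  | 1, 2 => exact h12
  | 1, 3 => exact h12.trans h23
  | 2, 3 => exact h23
  | 0, 0 => exact absurd hij (by decide)
  | 1, 0 => exact absurd hij (by decide)
  | 1, 1 => exact absurd hij (by decide)
  | 2, 0 => exact absurd hij (by decide)
  | 2, 1 => exact absurd hij (by decide)
  | 2, 2 => exact absurd hij (by decide)
  | 3, 0 => exact absurd hij (by decide)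
  | 3, 1 => exact absurd hij (by decide)
  | 3, 2 => exact absurd hij (by decide)
  | 3, 3 => exact absurd hij (by decide)

lemma contains_1234 {n : ℕ} (σ : Equiv.Perm (Fin n)) {w x y z : Fin n}
    (hwx : w < x) (hxy : x < y) (hyz : y < z)
    (v1 : (σ w : ℕ) < σ x) (v2 : (σ x : ℕ) < σ y) (v3 : (σ y : ℕ) < σ z) :
    PermContains σ (![0, 1, 2, 3] : Fin 4 → Fin 4) := by
  refine ⟨![w, x, y, z], strictMono_vec4 hwx hxy hyz, ?_⟩
  have hmono : StrictMono (fun a : Fin 4 => ((σ (![w, x, y, z] a) : Fin n) : ℕ)) := by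
    intro i j hij
    match i, j with
    | 0, 1 => exact v1
    | 0, 2 => exact v1.trans v2
    | 0, 3 => exact (v1.trans v2).trans v3
    | 1, 2 => exact v2
    | 1, 3 => exact v2.trans v3
    | 2, 3 => exact v3
    | 0, 0 => exact absurd hij (by decide)
    | 1, 0 => exact absurd hij (by decide)
    | 1, 1 => exact absurd hij (by decide)
    | 2, 0 => exact absurd hij (by decide)
    | 2, 1 => exact absurd hij (by decide)
    | 2, 2 => exact absurd hij (by decide)
    | 3, 0 => exact absurd hij (by decide)
    | 3, 1 => exact absurd hij (by decide)
    | 3, 2 => exact absurd hij (by decide)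
    | 3, 3 => exact absurd hij (by decide)
  have hp : ∀ a b : Fin 4, (![0, 1, 2, 3] : Fin 4 → Fin 4) a < (![0, 1, 2, 3] : Fin 4 → Fin 4) b ↔ a < b := by decide
  intro a b
  exact (hp a b).trans (hmono.lt_iff_lt.symm.trans Fin.lt_def.symm)

lemma val_ne {n : ℕ} (σ : Equiv.Perm (Fin n)) {a b : Fin n} (h : (a : ℕ) ≠ (b : ℕ)) :
    (σ a : ℕ) ≠ (σ b : ℕ) :=
  fun he => h (congrArg Fin.val (σ.injective (Fin.ext he)))

lemma gap {n : ℕ} {σ : Equiv.Perm (Fin n)}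
    (h132 : PermAvoids σ p132) (h213 : PermAvoids σ p213)
    (h1234 : PermAvoids σ (![0, 1, 2, 3] : Fin 4 → Fin 4))
    (i j : Fin n) (hij : (i : ℕ) < j) (hlt : (σ i : ℕ) < σ j) : (j : ℕ) - (i : ℕ) ≤ 2 := by
  by_contra hcon
  have h3 : (i : ℕ) + 3 ≤ j := by omega
  have hn := j.isLt
  set k1 : Fin n := ⟨(i : ℕ) + 1, by omega⟩ with hk1
  set k2 : Fin n := ⟨(i : ℕ) + 2, by omega⟩ with hk2
  have hik1 : i < k1 := by rw [Fin.lt_def]; simp [hk1]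
  have hk1k2 : k1 < k2 := by rw [Fin.lt_def]; simp [hk1, hk2]
  have hk2j : k2 < j := by rw [Fin.lt_def]; simp [hk2]; omega
  have hk1j : k1 < j := hk1k2.trans hk2j
  -- σ i < σ k1
  have s1 : (σ i : ℕ) < σ k1 := by
    rcases lt_or_gt_of_ne (val_ne σ (a := k1) (b := i) (by simp [hk1])) with h | h
    · exact absurd (contains_213 σ hik1 hk1j (by omega) (by omega)) h213
    · exact h
  have e1 : (σ k1 : ℕ) = (σ i : ℕ) + 1 := run1 h132 h213 i k1 (by simp [hk1]) s1
  -- σ k1 < σ j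
  have s2 : (σ k1 : ℕ) < σ j := by
    rcases lt_or_gt_of_ne (val_ne σ (a := k1) (b := j) (by simp [hk1]; omega)) with h | h
    · exact h
    · exact absurd (contains_132 σ hik1 hk1j (by omega) (by omega)) h132
  -- σ k1 < σ k2
  have s3 : (σ k1 : ℕ) < σ k2 := by
    rcases lt_or_gt_of_ne (val_ne σ (a := k2) (b := k1) (by simp [hk1, hk2])) with h | h
    · exact absurd (contains_213 σ hk1k2 hk2j (by omega) (by omega)) h213
    · exact h
  have e2 : (σ k2 : ℕ) = (σ k1 : ℕ) + 1 := run1 h132 h213 k1 k2 (by simp [hk1, hk2]) s3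
  have ej : (σ j : ℕ) = (σ i : ℕ) + ((j : ℕ) - (i : ℕ) - 1 + 1) :=
    run h132 h213 ((j : ℕ) - (i : ℕ) - 1) i j (by omega) hlt
  exact absurd (contains_1234 σ hik1 hk1k2 hk2j (by omega) (by omega) (by omega)) h1234

lemma Q_of_avoid {n : ℕ} {σ : Equiv.Perm (Fin n)}
    (h132 : PermAvoids σ p132) (h213 : PermAvoids σ p213)
    (h1234 : PermAvoids σ (![0, 1, 2, 3] : Fin 4 → Fin 4)) : Q σ := by
  intro i j hij hlt
  rw [Fin.lt_def] at hij hlt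
  constructor
  · have := run h132 h213 ((j : ℕ) - (i : ℕ) - 1) i j (by omega) hlt
    omega
  · exact gap h132 h213 h1234 i j hij hlt

lemma avoid_of_Q {n : ℕ} {σ : Equiv.Perm (Fin n)} (hσ : Q σ) :
    PermAvoids σ p132 ∧ PermAvoids σ p213 ∧
      PermAvoids σ (![0, 1, 2, 3] : Fin 4 → Fin 4) := by
  refine ⟨?_, ?_, ?_⟩
  · rintro ⟨f, hf, hiff⟩
    have h01f : f 0 < f 1 := hf (by decide)
    have h12f : f 1 < f 2 := hf (by decide)
    have v01 : σ (f 0) < σ (f 1) := (hiff 0 1).mp (by decide)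
    have v02 : σ (f 0) < σ (f 2) := (hiff 0 2).mp (by decide)
    have v21 : σ (f 2) < σ (f 1) := (hiff 2 1).mp (by decide)
    obtain ⟨e1, -⟩ := hσ (f 0) (f 1) h01f v01
    obtain ⟨e2, -⟩ := hσ (f 0) (f 2) (h01f.trans h12f) v02
    rw [Fin.lt_def] at h01f h12f v21
    omega
  · rintro ⟨f, hf, hiff⟩
    have h01f : f 0 < f 1 := hf (by decide)
    have h12f : f 1 < f 2 := hf (by decide)
    have v10 : σ (f 1) < σ (f 0) := (hiff 1 0).mp (by decide)
    have v02 : σ (f 0) < σ (f 2) := (hiff 0 2).mp (by decide)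
    have v12 : σ (f 1) < σ (f 2) := (hiff 1 2).mp (by decide)
    obtain ⟨e1, -⟩ := hσ (f 0) (f 2) (h01f.trans h12f) v02
    obtain ⟨e2, -⟩ := hσ (f 1) (f 2) h12f v12
    rw [Fin.lt_def] at h01f h12f v10
    omega
  · rintro ⟨f, hf, hiff⟩
    have h01f : f 0 < f 1 := hf (by decide)
    have h12f : f 1 < f 2 := hf (by decide)
    have h23f : f 2 < f 3 := hf (by decide)
    have v03 : σ (f 0) < σ (f 3) := (hiff 0 3).mp (by decide)
    obtain ⟨-, e2⟩ := hσ (f 0) (f 3) ((h01f.trans h12f).trans h23f) v03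
    rw [Fin.lt_def] at h01f h12f h23f
    omega

def buildP (n m : ℕ) (h : m < n) (τ : Equiv.Perm (Fin m)) : Equiv.Perm (Fin n) where
  toFun i := if hi : (i : ℕ) < n - m then ⟨m + i, by omega⟩
    else ⟨τ ⟨(i : ℕ) - (n - m), by have := i.isLt; omega⟩, by
      have := (τ ⟨(i : ℕ) - (n - m), by have := i.isLt; omega⟩).isLt; omega⟩
  invFun v := if hv : (v : ℕ) < m then ⟨(n - m) + τ.symm ⟨v, hv⟩, by
      have := (τ.symm ⟨(v : ℕ), hv⟩).isLt; omega⟩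
    else ⟨(v : ℕ) - m, by have := v.isLt; omega⟩
  left_inv i := by
    by_cases hi : (i : ℕ) < n - m
    · simp only [dif_pos hi]
      rw [dif_neg (by simp)]
      exact Fin.ext (by simp)
    · simp only [dif_neg hi]
      rw [dif_pos (by simp)]
      apply Fin.ext
      simp only
      rw [show (⟨(τ ⟨(i : ℕ) - (n - m), _⟩ : Fin m), _⟩ : Fin m) = τ ⟨(i : ℕ) - (n - m), _⟩ from Fin.ext rfl]
      rw [Equiv.symm_apply_apply]
      simp only
      have := i.isLt
      omega
  right_inv v := by
    by_cases hv : (v : ℕ) < m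
    · simp only [dif_pos hv]
      rw [dif_neg (by simp)]
      apply Fin.ext
      simp only
      rw [show (⟨(n - m) + (τ.symm ⟨(v : ℕ), hv⟩ : Fin m) - (n - m), _⟩ : Fin m)
            = τ.symm ⟨(v : ℕ), hv⟩ from Fin.ext (by simp)]
      rw [Equiv.apply_symm_apply]
    · simp only [dif_neg hv]
      rw [dif_pos (by have := v.isLt; simp; omega)]
      exact Fin.ext (by have := v.isLt; simp; omega)

lemma buildP_apply_lt {n m : ℕ} (h : m < n) (τ : Equiv.Perm (Fin m)) (i : Fin n)
    (hi : (i : ℕ) < n - m) : ((buildP n m h τ) i : ℕ) = m + i := by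
  simp only [buildP, Equiv.coe_fn_mk, dif_pos hi]

lemma buildP_apply_ge {n m : ℕ} (h : m < n) (τ : Equiv.Perm (Fin m)) (i : Fin n)
    (hi : ¬ (i : ℕ) < n - m) :
    ((buildP n m h τ) i : ℕ) = τ ⟨(i : ℕ) - (n - m), by have := i.isLt; omega⟩ := by
  simp only [buildP, Equiv.coe_fn_mk, dif_neg hi]

lemma buildP_zero {n m : ℕ} (h : m < n) (τ : Equiv.Perm (Fin m)) (h0 : 0 < n) :
    ((buildP n m h τ) ⟨0, h0⟩ : ℕ) = m := by
  rw [buildP_apply_lt h τ _ (by simp; omega)]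
  simp

lemma Q_buildP {n m : ℕ} (h : m < n) (h3 : n - m ≤ 3) {τ : Equiv.Perm (Fin m)}
    (hτ : Q τ) : Q (buildP n m h τ) := by
  intro i j hij hlt
  rw [Fin.lt_def] at hij hlt
  by_cases hi : (i : ℕ) < n - m
  · by_cases hj : (j : ℕ) < n - m
    · rw [buildP_apply_lt h τ i hi, buildP_apply_lt h τ j hj]
      rw [buildP_apply_lt h τ i hi, buildP_apply_lt h τ j hj] at hlt
      omega
    · -- σ i ≥ m > σ j, contradiction with hlt
      rw [buildP_apply_lt h τ i hi, buildP_apply_ge h τ j hj] at hlt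
      have := (τ ⟨(j : ℕ) - (n - m), by have := j.isLt; omega⟩).isLt
      omega
  · have hj : ¬ (j : ℕ) < n - m := by omega
    rw [buildP_apply_ge h τ i hi, buildP_apply_ge h τ j hj] at hlt ⊢
    obtain ⟨e1, e2⟩ := hτ ⟨(i : ℕ) - (n - m), by have := i.isLt; omega⟩
      ⟨(j : ℕ) - (n - m), by have := j.isLt; omega⟩
      (by rw [Fin.lt_def]; simp; omega) (by rw [Fin.lt_def]; exact hlt)
    simp only at e1 e2
    constructor
    · rw [e1]; congr 1; omega
    · omega

lemma F1 {n : ℕ} {σ : Equiv.Perm (Fin n)} (hσ : Q σ) (h0 : 0 < n) (i : Fin n)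
    (hi : (i : ℕ) < n - (σ ⟨0, h0⟩ : ℕ)) :
    (σ i : ℕ) = (σ ⟨0, h0⟩ : ℕ) + i := by
  set a := (σ ⟨0, h0⟩ : ℕ) with ha
  by_cases h00 : (i : ℕ) = 0
  · have : i = ⟨0, h0⟩ := Fin.ext h00
    rw [this]; omega
  · have hv : a + (i : ℕ) < n := by omega
    set v : Fin n := ⟨a + i, hv⟩ with hvdef
    set q := σ.symm v with hq
    have hqv : σ q = v := σ.apply_symm_apply v
    have hqval : (σ q : ℕ) = a + i := by rw [hqv]
    have hq0 : (0 : ℕ) < q := by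
      rcases Nat.eq_zero_or_pos (q : ℕ) with h | h
      · exfalso; have : q = ⟨0, h0⟩ := Fin.ext h
        rw [this] at hqval; omega
      · exact h
    obtain ⟨e1, -⟩ := hσ ⟨0, h0⟩ q (by rw [Fin.lt_def]; exact hq0) (by omega)
    simp only at e1
    have : (q : ℕ) = i := by omega
    have hqi : q = i := Fin.ext this
    rw [hqi] at hqval
    omega

lemma F2 {n : ℕ} {σ : Equiv.Perm (Fin n)} (hσ : Q σ) (h0 : 0 < n) (i : Fin n)
    (hi : n - (σ ⟨0, h0⟩ : ℕ) ≤ (i : ℕ)) :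
    (σ i : ℕ) < σ ⟨0, h0⟩ := by
  set a := (σ ⟨0, h0⟩ : ℕ) with ha
  have han : a < n := (σ ⟨0, h0⟩).isLt
  by_contra hcon
  by_cases heq : (σ i : ℕ) = a
  · have : σ i = σ ⟨0, h0⟩ := Fin.ext heq
    have := σ.injective this
    have := congrArg Fin.val this
    simp at this
    omega
  · have hlt : a < σ i := by omega
    obtain ⟨e1, -⟩ := hσ ⟨0, h0⟩ i (by rw [Fin.lt_def]; simp; omega) hlt
    simp only at e1
    have := (σ i).isLt
    omega

lemma r_le3 {n : ℕ} {σ : Equiv.Perm (Fin n)} (hσ : Q σ) (h0 : 0 < n) :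
    n - 3 ≤ (σ ⟨0, h0⟩ : ℕ) := by
  set a := (σ ⟨0, h0⟩ : ℕ) with ha
  by_contra hcon
  have h3n : 3 < n := by omega
  have e := F1 hσ h0 ⟨3, by omega⟩ (by simp; omega)
  obtain ⟨-, e2⟩ := hσ ⟨0, h0⟩ ⟨3, by omega⟩ (by rw [Fin.lt_def]; simp) (by simp at e ⊢; omega)
  simp at e2

noncomputable def decompTau (n m : ℕ) (h0 : 0 < n) (σ : Equiv.Perm (Fin n)) (hσ : Q σ)
    (hm : (σ ⟨0, h0⟩ : ℕ) = m) : Equiv.Perm (Fin m) :=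
  have hmn : m < n := hm ▸ (σ ⟨0, h0⟩).isLt
  Equiv.ofBijective
    (fun j => ⟨(σ ⟨(n - m) + j, by have := j.isLt; omega⟩ : Fin n), by
      have := F2 hσ h0 ⟨(n - m) + j, by have := j.isLt; omega⟩ (by simp [hm])
      omega⟩)
    (Finite.injective_iff_bijective.mp (by
      intro j1 j2 hj
      have h1 := congrArg Fin.val hj
      simp only at h1
      have h2 := σ.injective (Fin.ext h1)
      have h3 := congrArg Fin.val h2
      simp only at h3
      exact Fin.ext (by omega)))

lemma decompTau_apply {n m : ℕ} (h0 : 0 < n) (σ : Equiv.Perm (Fin n)) (hσ : Q σ)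
    (hm : (σ ⟨0, h0⟩ : ℕ) = m) (j : Fin m) :
    ((decompTau n m h0 σ hσ hm) j : ℕ)
      = σ ⟨(n - m) + j, by have := j.isLt; have := hm ▸ (σ ⟨0, h0⟩).isLt; omega⟩ := rfl

lemma Q_decompTau {n m : ℕ} (h0 : 0 < n) (σ : Equiv.Perm (Fin n)) (hσ : Q σ)
    (hm : (σ ⟨0, h0⟩ : ℕ) = m) : Q (decompTau n m h0 σ hσ hm) := by
  intro i j hij hlt
  rw [Fin.lt_def] at hij hlt
  rw [decompTau_apply] at hlt ⊢
  rw [decompTau_apply]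
  have hmn : m < n := hm ▸ (σ ⟨0, h0⟩).isLt
  obtain ⟨e1, e2⟩ := hσ ⟨(n - m) + i, by have := i.isLt; omega⟩
    ⟨(n - m) + j, by have := j.isLt; omega⟩
    (by rw [Fin.lt_def]; simp; omega) hlt
  simp only at e1 e2
  constructor
  · rw [e1]; congr 1; omega
  · omega

lemma buildP_decompTau {n m : ℕ} (h0 : 0 < n) (σ : Equiv.Perm (Fin n)) (hσ : Q σ)
    (hm : (σ ⟨0, h0⟩ : ℕ) = m) :
    buildP n m (hm ▸ (σ ⟨0, h0⟩).isLt) (decompTau n m h0 σ hσ hm) = σ := by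
  have hmn : m < n := hm ▸ (σ ⟨0, h0⟩).isLt
  apply Equiv.ext
  intro i
  apply Fin.ext
  by_cases hi : (i : ℕ) < n - m
  · rw [buildP_apply_lt _ _ _ hi]
    have := F1 hσ h0 i (by omega)
    omega
  · rw [buildP_apply_ge _ _ _ hi]
    rw [decompTau_apply]
    congr 2
    apply Fin.ext
    simp only
    have := i.isLt
    omega

lemma decompTau_buildP {n m : ℕ} (h0 : 0 < n) (h : m < n) (τ : Equiv.Perm (Fin m))
    (hq : Q (buildP n m h τ)) (hmm : ((buildP n m h τ) ⟨0, h0⟩ : ℕ) = m) :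
    decompTau n m h0 (buildP n m h τ) hq hmm = τ := by
  apply Equiv.ext
  intro j
  apply Fin.ext
  rw [decompTau_apply]
  rw [buildP_apply_ge _ _ _ (by simp)]
  congr 2
  apply Fin.ext
  simp

lemma card_rec {n : ℕ} (hn : 5 ≤ n) :
    Nat.card {σ : Equiv.Perm (Fin n) // Q σ}
      = Nat.card {σ : Equiv.Perm (Fin (n - 1)) // Q σ}
        + Nat.card {σ : Equiv.Perm (Fin (n - 2)) // Q σ}
        + Nat.card {σ : Equiv.Perm (Fin (n - 3)) // Q σ} := by
  have h0 : 0 < n := by omega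
  have e : {σ : Equiv.Perm (Fin n) // Q σ} ≃
      ({σ : Equiv.Perm (Fin (n - 1)) // Q σ} ⊕
        ({σ : Equiv.Perm (Fin (n - 2)) // Q σ} ⊕ {σ : Equiv.Perm (Fin (n - 3)) // Q σ})) :=
    { toFun := fun s =>
        if h1 : ((s.1 ⟨0, h0⟩ : Fin n) : ℕ) = n - 1 then
          Sum.inl ⟨decompTau n (n - 1) h0 s.1 s.2 h1, Q_decompTau h0 s.1 s.2 h1⟩
        else if h2 : ((s.1 ⟨0, h0⟩ : Fin n) : ℕ) = n - 2 then
          Sum.inr (Sum.inl ⟨decompTau n (n - 2) h0 s.1 s.2 h2, Q_decompTau h0 s.1 s.2 h2⟩)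
        else
          Sum.inr (Sum.inr ⟨decompTau n (n - 3) h0 s.1 s.2
            (by have ha := r_le3 s.2 h0; have := (s.1 ⟨0, h0⟩).isLt; omega),
            Q_decompTau h0 s.1 s.2 _⟩)
      invFun := fun t => match t with
        | Sum.inl τ => ⟨buildP n (n - 1) (by omega) τ.1, Q_buildP (by omega) (by omega) τ.2⟩
        | Sum.inr (Sum.inl τ) =>
            ⟨buildP n (n - 2) (by omega) τ.1, Q_buildP (by omega) (by omega) τ.2⟩
        | Sum.inr (Sum.inr τ) =>
            ⟨buildP n (n - 3) (by omega) τ.1, Q_buildP (by omega) (by omega) τ.2⟩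
      left_inv := by
        rintro ⟨σ, hσ⟩
        dsimp only
        split_ifs with h1 h2
        · exact Subtype.ext (buildP_decompTau h0 σ hσ h1)
        · exact Subtype.ext (buildP_decompTau h0 σ hσ h2)
        · exact Subtype.ext (buildP_decompTau h0 σ hσ
            (by have ha := r_le3 hσ h0; have := (σ ⟨0, h0⟩).isLt; omega))
      right_inv := by
        rintro (τ | τ | τ)
        · dsimp only
          rw [dif_pos (by rw [buildP_zero])]
          exact congrArg Sum.inl (Subtype.ext (decompTau_buildP h0 (by omega) τ.1 (Q_buildP (by omega) (by omega) τ.2) (buildP_zero _ _ h0)))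
        · dsimp only
          rw [dif_neg (by rw [buildP_zero]; omega), dif_pos (by rw [buildP_zero])]
          exact congrArg (fun x => Sum.inr (Sum.inl x)) (Subtype.ext (decompTau_buildP h0 (by omega) τ.1 (Q_buildP (by omega) (by omega) τ.2) (buildP_zero _ _ h0)))
        · dsimp only
          rw [dif_neg (by rw [buildP_zero]; omega), dif_neg (by rw [buildP_zero]; omega)]
          exact congrArg (fun x => Sum.inr (Sum.inr x)) (Subtype.ext (decompTau_buildP h0 (by omega) τ.1 (Q_buildP (by omega) (by omega) τ.2) (buildP_zero _ _ h0))) }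
  rw [Nat.card_congr e, Nat.card_sum, Nat.card_sum, add_assoc]

end Stmt11

theorem stmt11 (c : ℕ → ℕ)
    (hc : ∀ n, c n = Nat.card {σ : Equiv.Perm (Fin n) //
      PermAvoids σ p132 ∧ PermAvoids σ p213 ∧ PermAvoids σ (![0, 1, 2, 3] : Fin 4 → Fin 4)}) :
    ∀ n, 5 ≤ n → c n = c (n - 1) + c (n - 2) + c (n - 3) := by
  have card_eq : ∀ k : ℕ, Nat.card {σ : Equiv.Perm (Fin k) //
      PermAvoids σ p132 ∧ PermAvoids σ p213 ∧ PermAvoids σ (![0, 1, 2, 3] : Fin 4 → Fin 4)}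
      = Nat.card {σ : Equiv.Perm (Fin k) // Stmt11.Q σ} := fun k =>
    Nat.card_congr (Equiv.subtypeEquivRight fun σ =>
      ⟨fun h => Stmt11.Q_of_avoid h.1 h.2.1 h.2.2, Stmt11.avoid_of_Q⟩)
  intro n hn
  rw [hc n, hc (n - 1), hc (n - 2), hc (n - 3), card_eq, card_eq, card_eq, card_eq]
  exact Stmt11.card_rec hn
end
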